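/- arXiv:2501.01017 — 5 statements merged into one kernel-verified Lean document; each statement's English description precedes it below -/
import Mathlib

section
/- If λ ∈ Γ_k (i.e., σ_i(λ) > 0 for 1 ≤ i ≤ k), then for every index 1 ≤ i ≤ n one has σ_{k-1}(λ|i) > 0, where σ_{k-1}(λ|i) is the (k-1)-th elementary symmetric polynomial of λ with the i-th variable removed. -/
open Finset

noncomputable def esym (n k : ℕ) (l : Fin n → ℝ) : ℝ :=
  ∑ s ∈ Finset.univ.powersetCard k, ∏ i ∈ s, l i

noncomputable def esymDel (n k : ℕ) (l : Fin n → ℝ) (i : Fin n) : ℝ :=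
  ∑ s ∈ (Finset.univ.erase i).powersetCard k, ∏ j ∈ s, l j

def GammaCone (n k : ℕ) (l : Fin n → ℝ) : Prop :=
  ∀ i : ℕ, 1 ≤ i → i ≤ k → 0 < esym n i l

section Aux
variable {ι : Type*} [DecidableEq ι]
set_option linter.unusedSectionVars false


noncomputable def Ees (A : Finset ι) (k : ℕ) (l : ι → ℝ) : ℝ :=
  ∑ s ∈ A.powersetCard k, ∏ j ∈ s, l j

lemma Ees_zero (A : Finset ι) (l : ι → ℝ) : Ees A 0 l = 1 := by
  simp [Ees]

lemma Ees_pos_of_pos {A : Finset ι} {k : ℕ} {l : ι → ℝ} (h : ∀ i ∈ A, 0 < l i)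
    (hk : k ≤ A.card) : 0 < Ees A k l := by
  refine Finset.sum_pos (fun s hs => ?_) (powersetCard_nonempty.2 hk)
  rw [mem_powersetCard] at hs
  exact Finset.prod_pos fun j hj => h j (hs.1 hj)

lemma Ees_nonneg_of_nonneg {A : Finset ι} {k : ℕ} {l : ι → ℝ} (h : ∀ i ∈ A, 0 ≤ l i) :
    0 ≤ Ees A k l := by
  refine Finset.sum_nonneg fun s hs => ?_
  rw [mem_powersetCard] at hs
  exact Finset.prod_nonneg fun j hj => h j (hs.1 hj)

lemma Ees_erase {A : Finset ι} {i : ι} (hi : i ∈ A) (k : ℕ) (l : ι → ℝ) :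
    Ees A (k+1) l = l i * Ees (A.erase i) k l + Ees (A.erase i) (k+1) l := by
  have hA : A = insert i (A.erase i) := (insert_erase hi).symm
  conv_lhs => rw [Ees, hA, powersetCard_succ_insert (notMem_erase i A)]
  rw [Finset.sum_union]
  · rw [Finset.sum_image]
    · rw [add_comm]
      congr 1
      rw [Ees, Finset.mul_sum]
      refine Finset.sum_congr rfl fun s hs => ?_
      rw [mem_powersetCard] at hs
      have : i ∉ s := fun h => (notMem_erase i A) (hs.1 h)
      rw [Finset.prod_insert this]
    · intro s hs t ht hst
      rw [Finset.mem_coe, mem_powersetCard] at hs ht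
      have his : i ∉ s := fun h => (notMem_erase i A) (hs.1 h)
      have hit : i ∉ t := fun h => (notMem_erase i A) (ht.1 h)
      have := congrArg (fun u => Finset.erase u i) hst
      simpa [Finset.erase_insert his, Finset.erase_insert hit] using this
  · rw [Finset.disjoint_left]
    intro s hs hs'
    rw [mem_powersetCard] at hs
    rw [Finset.mem_image] at hs'
    obtain ⟨t, _, rfl⟩ := hs'
    exact (notMem_erase i A) (hs.1 (mem_insert_self i t))

lemma Ees_continuous (A : Finset ι) (k : ℕ) (l : ι → ℝ) :
    Continuous fun t : ℝ => Ees A k (fun j => l j + t) := by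
  unfold Ees
  exact continuous_finset_sum _ fun s _ =>
    continuous_finset_prod _ fun j _ => (continuous_const.add continuous_id)

lemma count_subset_powersetCard {A u : Finset ι} (hu : u ⊆ A) {k : ℕ} (hk : u.card ≤ k) :
    ((A.powersetCard k).filter (fun s => u ⊆ s)).card = (A.card - u.card).choose (k - u.card) := by
  rw [← Finset.card_sdiff_of_subset hu, ← card_powersetCard (k - u.card) (A \ u)]
  refine Finset.card_bij' (fun s _ => s \ u) (fun v _ => v ∪ u) ?_ ?_ ?_ ?_
  · intro s hs
    rw [Finset.mem_filter, mem_powersetCard] at hs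
    obtain ⟨⟨hsA, hsc⟩, hus⟩ := hs
    rw [mem_powersetCard]
    exact ⟨sdiff_subset_sdiff hsA (le_refl u), by rw [Finset.card_sdiff_of_subset hus, hsc]⟩
  · intro v hv
    rw [mem_powersetCard] at hv
    obtain ⟨hvA, hvc⟩ := hv
    have hdisj : Disjoint v u := Finset.disjoint_left.2 fun x hxv hxu =>
      (Finset.mem_sdiff.1 (hvA hxv)).2 hxu
    rw [Finset.mem_filter, mem_powersetCard]
    refine ⟨⟨?_, ?_⟩, Finset.subset_union_right⟩
    · exact Finset.union_subset (hvA.trans sdiff_subset) hu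
    · rw [Finset.card_union_of_disjoint hdisj, hvc]
      omega
  · intro s hs
    rw [Finset.mem_filter] at hs
    exact Finset.sdiff_union_of_subset hs.2
  · intro v hv
    rw [mem_powersetCard] at hv
    have hdisj : Disjoint v u := Finset.disjoint_left.2 fun x hxv hxu =>
      (Finset.mem_sdiff.1 (hv.1 hxv)).2 hxu
    exact Finset.union_sdiff_cancel_right hdisj

lemma count_subset_powersetCard_zero {A u : Finset ι} {k : ℕ} (hk : k < u.card) :
    ((A.powersetCard k).filter (fun s => u ⊆ s)) = ∅ := by
  rw [Finset.filter_eq_empty_iff]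
  intro s hs
  rw [mem_powersetCard] at hs
  intro hus
  exact absurd (Finset.card_le_card hus) (by omega)

lemma Ees_shift {A : Finset ι} {k : ℕ} (hk : k ≤ A.card) (l : ι → ℝ) (t : ℝ) :
    Ees A k (fun j => l j + t) =
      ∑ m ∈ Finset.range (k+1), ((A.card - k + m).choose m : ℝ) * t^m * Ees A (k-m) l := by
  have step1 : Ees A k (fun j => l j + t)
      = ∑ s ∈ A.powersetCard k, ∑ u ∈ s.powerset, (∏ j ∈ u, l j) * t^(k - u.card) := by
    unfold Ees
    refine Finset.sum_congr rfl fun s hs => ?_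
    rw [mem_powersetCard] at hs
    rw [Finset.prod_add]
    refine Finset.sum_congr rfl fun u hu => ?_
    rw [Finset.mem_powerset] at hu
    rw [Finset.prod_const, Finset.card_sdiff_of_subset hu, hs.2]
  rw [step1]
  rw [Finset.sum_comm' (t' := A.powerset)
    (s' := fun u => (A.powersetCard k).filter (fun s => u ⊆ s)) ?_]
  swap
  · intro s u
    simp only [mem_powersetCard, Finset.mem_powerset, Finset.mem_filter]
    constructor
    · rintro ⟨⟨hsA, hsc⟩, hus⟩
      exact ⟨⟨⟨hsA, hsc⟩, hus⟩, hus.trans hsA⟩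
    · rintro ⟨⟨⟨hsA, hsc⟩, hus⟩, _⟩
      exact ⟨⟨hsA, hsc⟩, hus⟩
  have step2 : ∑ u ∈ A.powerset, ∑ _s ∈ (A.powersetCard k).filter (fun s => u ⊆ s),
        (∏ j ∈ u, l j) * t^(k - u.card)
      = ∑ u ∈ A.powerset, (((A.powersetCard k).filter (fun s => u ⊆ s)).card : ℝ)
          * ((∏ j ∈ u, l j) * t^(k - u.card)) := by
    refine Finset.sum_congr rfl fun u _ => ?_
    rw [Finset.sum_const, nsmul_eq_mul]
  rw [step2]
  rw [powerset_card_disjiUnion]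
  erw [Finset.sum_disjiUnion]
  have step3 : ∀ j ∈ Finset.range (A.card + 1),
      ∑ u ∈ A.powersetCard j, (((A.powersetCard k).filter (fun s => u ⊆ s)).card : ℝ)
          * ((∏ j ∈ u, l j) * t^(k - u.card))
      = if j ≤ k then ((A.card - j).choose (k-j) : ℝ) * t^(k-j) * Ees A j l else 0 := by
    intro j hj
    by_cases hjk : j ≤ k
    · rw [if_pos hjk, Ees, Finset.mul_sum]
      refine Finset.sum_congr rfl fun u hu => ?_
      rw [mem_powersetCard] at hu
      rw [count_subset_powersetCard hu.1 (by omega : u.card ≤ k), hu.2]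
      ring
    · rw [if_neg hjk]
      refine Finset.sum_eq_zero fun u hu => ?_
      rw [mem_powersetCard] at hu
      rw [count_subset_powersetCard_zero (by omega : k < u.card)]
      simp
  rw [Finset.sum_congr rfl step3]
  rw [Finset.sum_ite, Finset.sum_const_zero, add_zero]
  have hfilter : (Finset.range (A.card + 1)).filter (fun j => j ≤ k) = Finset.range (k+1) := by
    ext j
    simp only [Finset.mem_filter, Finset.mem_range]
    omega
  rw [hfilter]
  rw [← Finset.sum_range_reflect]
  refine Finset.sum_congr rfl fun m hm => ?_
  rw [Finset.mem_range] at hm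
  have h1 : k + 1 - 1 - m = k - m := by omega
  have h2 : A.card - (k - m) = A.card - k + m := by omega
  have h3 : k - (k - m) = m := by omega
  rw [h1, h2, h3]

lemma Ees_mul_card {A : Finset ι} (k : ℕ) (l : ι → ℝ) :
    ((k+1 : ℕ) : ℝ) * Ees A (k+1) l = ∑ i ∈ A, l i * Ees (A.erase i) k l := by
  have rhs : ∑ i ∈ A, l i * Ees (A.erase i) k l
      = ∑ p ∈ A.sigma (fun i => (A.erase i).powersetCard k), l p.1 * ∏ j ∈ p.2, l j := by
    rw [Finset.sum_sigma]
    refine Finset.sum_congr rfl fun i _ => ?_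
    rw [Ees, Finset.mul_sum]
  have lhs : ((k+1:ℕ):ℝ) * Ees A (k+1) l
      = ∑ p ∈ (A.powersetCard (k+1)).sigma (fun w => w), l p.2 * ∏ j ∈ p.1.erase p.2, l j := by
    rw [Finset.sum_sigma, Ees, Finset.mul_sum]
    refine Finset.sum_congr rfl fun w hw => ?_
    rw [mem_powersetCard] at hw
    have : ∀ i ∈ w, l i * ∏ j ∈ w.erase i, l j = ∏ j ∈ w, l j :=
      fun i hi => Finset.mul_prod_erase w l hi
    rw [Finset.sum_congr rfl this, Finset.sum_const, hw.2, nsmul_eq_mul]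
  rw [lhs, rhs]
  refine Finset.sum_bij' (fun p _ => (⟨p.2, p.1.erase p.2⟩ : Σ _ : ι, Finset ι))
    (fun p _ => (⟨insert p.1 p.2, p.1⟩ : Σ _ : Finset ι, ι)) ?_ ?_ ?_ ?_ ?_
  · rintro ⟨w, i⟩ hp
    rw [Finset.mem_sigma, mem_powersetCard] at hp
    obtain ⟨⟨hwA, hwc⟩, hiw⟩ := hp
    rw [Finset.mem_sigma, mem_powersetCard]
    exact ⟨hwA hiw, Finset.erase_subset_erase i hwA,
      by rw [Finset.card_erase_of_mem hiw, hwc]; omega⟩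
  · rintro ⟨i, s⟩ hp
    rw [Finset.mem_sigma, mem_powersetCard] at hp
    obtain ⟨hiA, hsA, hsc⟩ := hp
    have his : i ∉ s := fun h => Finset.notMem_erase i A (hsA h)
    rw [Finset.mem_sigma, mem_powersetCard]
    refine ⟨⟨?_, ?_⟩, Finset.mem_insert_self i s⟩
    · exact Finset.insert_subset hiA (hsA.trans (Finset.erase_subset _ _))
    · rw [Finset.card_insert_of_notMem his, hsc]
  · rintro ⟨w, i⟩ hp
    rw [Finset.mem_sigma, mem_powersetCard] at hp
    show (⟨insert i (w.erase i), i⟩ : Σ _ : Finset ι, ι) = ⟨w, i⟩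
    rw [Finset.insert_erase hp.2]
  · rintro ⟨i, s⟩ hp
    rw [Finset.mem_sigma, mem_powersetCard] at hp
    have his : i ∉ s := fun h => Finset.notMem_erase i A (hp.2.1 h)
    show (⟨i, (insert i s).erase i⟩ : Σ _ : ι, Finset ι) = ⟨i, s⟩
    rw [Finset.erase_insert his]
  · rintro ⟨w, i⟩ _
    rfl

lemma cont_pos_near {F : ℝ → ℝ} (hF : Continuous F) {x : ℝ} (hx : 0 < F x) :
    ∃ δ > 0, ∀ y, |y - x| < δ → 0 < F y := by
  have h1 : {y : ℝ | 0 < F y} ∈ nhds x := (isOpen_lt continuous_const hF).mem_nhds hx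
  rw [Metric.mem_nhds_iff] at h1
  obtain ⟨δ, hδ, hsub⟩ := h1
  exact ⟨δ, hδ, fun y hy => hsub (by rwa [Metric.mem_ball, Real.dist_eq])⟩

lemma cont_neg_near {F : ℝ → ℝ} (hF : Continuous F) {x : ℝ} (hx : F x < 0) :
    ∃ δ > 0, ∀ y, |y - x| < δ → F y < 0 := by
  have h1 : {y : ℝ | F y < 0} ∈ nhds x := (isOpen_lt hF continuous_const).mem_nhds hx
  rw [Metric.mem_nhds_iff] at h1
  obtain ⟨δ, hδ, hsub⟩ := h1
  exact ⟨δ, hδ, fun y hy => hsub (by rwa [Metric.mem_ball, Real.dist_eq])⟩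

lemma Ees_shift_pos {A : Finset ι} {k : ℕ} {l : ι → ℝ} {t : ℝ} (ht : 0 ≤ t) (hk : k ≤ A.card)
    (hpos : 0 < Ees A k l) (hnn : ∀ m, m ≤ k → 0 ≤ Ees A m l) :
    0 < Ees A k (fun j => l j + t) := by
  rw [Ees_shift hk]
  refine Finset.sum_pos' (fun m hm => ?_) ⟨0, Finset.mem_range.2 (by omega), ?_⟩
  · rw [Finset.mem_range] at hm
    have h1 : 0 ≤ Ees A (k-m) l := hnn _ (by omega)
    positivity
  · simpa using hpos

theorem Ees_key : ∀ k : ℕ, ∀ (A : Finset ι) (l : ι → ℝ), 1 ≤ k → k ≤ A.card →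
    (∀ j, 1 ≤ j → j ≤ k → 0 < Ees A j l) → ∀ i ∈ A, 0 < Ees (A.erase i) (k-1) l := by
  intro k
  induction k using Nat.strong_induction_on with
  | _ k IH =>
  intro A l hk1 hkA hΓ i hi
  rcases Nat.lt_or_ge k 2 with hk2 | hk2
  · -- k = 1
    have : k = 1 := by omega
    subst this
    rw [Ees_zero]
    norm_num
  obtain ⟨K, rfl⟩ : ∃ K, k = K + 2 := ⟨k - 2, by omega⟩
  set A' := A.erase i with hA'
  have hA'card : A'.card = A.card - 1 := Finset.card_erase_of_mem hi
  have hK1A' : K + 1 ≤ A'.card := by omega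
  show 0 < Ees A' (K+1) l
  by_contra hneg
  push_neg at hneg
  -- nonneg of all Ees A m l
  have hEnn : ∀ m, m ≤ K + 2 → 0 ≤ Ees A m l := by
    intro m hm
    rcases Nat.eq_zero_or_pos m with h0 | h1
    · subst h0; rw [Ees_zero]; norm_num
    · exact le_of_lt (hΓ m h1 hm)
  -- the ray function
  set f : ℝ → ℝ := fun t => Ees A' (K+1) (fun j => l j + t) with hf
  have hfc : Continuous f := Ees_continuous A' (K+1) l
  set S : Set ℝ := {t | 0 ≤ t ∧ f t ≤ 0} with hS
  have h0S : (0:ℝ) ∈ S := by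
    refine ⟨le_refl 0, ?_⟩
    have : (fun j => l j + (0:ℝ)) = l := by funext j; ring
    rw [hf]; simp only [this]; exact hneg
  -- upper bound
  set B : ℝ := 1 + ∑ j ∈ A', |l j| with hB
  have hposB : ∀ t : ℝ, B ≤ t → 0 < f t := by
    intro t htB
    refine Ees_pos_of_pos (fun j hj => ?_) hK1A'
    have h1 : |l j| ≤ ∑ j ∈ A', |l j| :=
      Finset.single_le_sum (fun j _ => abs_nonneg (l j)) hj
    have h2 : -l j ≤ |l j| := neg_le_abs (l j)
    linarith
  have hSB : ∀ t ∈ S, t ≤ B := by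
    intro t ht
    by_contra hc
    push_neg at hc
    exact absurd ht.2 (not_le.2 (hposB t hc.le))
  have hbdd : BddAbove S := ⟨B, hSB⟩
  set t₀ : ℝ := sSup S with ht₀
  have ht₀0 : 0 ≤ t₀ := le_csSup hbdd h0S
  have hft₀_le : f t₀ ≤ 0 := by
    by_contra hc
    push_neg at hc
    obtain ⟨δ, hδ, hball⟩ := cont_pos_near hfc hc
    obtain ⟨s, hsS, hs⟩ := exists_lt_of_lt_csSup ⟨0, h0S⟩ (show t₀ - δ < t₀ by linarith)
    have hsle : s ≤ t₀ := le_csSup hbdd hsS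
    have : 0 < f s := hball s (by rw [abs_lt]; constructor <;> linarith)
    exact absurd hsS.2 (not_le.2 this)
  have hft₀_ge : 0 ≤ f t₀ := by
    by_contra hc
    push_neg at hc
    obtain ⟨δ, hδ, hball⟩ := cont_neg_near hfc hc
    have hmem : t₀ + δ/2 ∈ S := by
      refine ⟨by linarith, le_of_lt (hball _ (by rw [abs_lt]; constructor <;> linarith))⟩
    have := le_csSup hbdd hmem
    linarith
  have hft₀ : f t₀ = 0 := le_antisymm hft₀_le hft₀_ge
  set μ : ι → ℝ := fun j => l j + t₀ with hμ
  -- μ is in the cone up to K+2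
  have hμΓ : ∀ j, 1 ≤ j → j ≤ K + 2 → 0 < Ees A j μ := by
    intro j hj1 hj2
    exact Ees_shift_pos ht₀0 (by omega) (hΓ j hj1 hj2) (fun m hm => hEnn m (by omega))
  -- IH gives lower-order positivity on A'
  have hμ' : ∀ j, j ≤ K → 0 < Ees A' j μ := by
    intro j hj
    rcases Nat.eq_zero_or_pos j with h0 | h1
    · subst h0; rw [Ees_zero]; norm_num
    · have := IH (j+1) (by omega) A μ (by omega) (by omega)
        (fun r hr1 hr2 => hμΓ r hr1 (by omega)) i hi
      simpa using this
  have hf0 : Ees A' (K+1) μ = 0 := hft₀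
  have hAk : 0 < Ees A (K+2) μ := hμΓ (K+2) (by omega) (by omega)
  have hA'k : 0 < Ees A' (K+2) μ := by
    have herase := Ees_erase hi (K+1) μ
    rw [hf0] at herase
    have : Ees A (K+2) μ = Ees A' (K+2) μ := by rw [herase]; ring
    rwa [this] at hAk
  have hKA' : K + 2 ≤ A'.card := by
    by_contra hc
    push_neg at hc
    have : A'.powersetCard (K+2) = ∅ := Finset.powersetCard_eq_empty.2 hc
    have : Ees A' (K+2) μ = 0 := by rw [Ees, this, Finset.sum_empty]
    linarith
  -- the second small ray
  set h : ℝ → ℝ := fun s => ∑ m ∈ Finset.range (K+1),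
      ((A'.card - (K+1) + (m+1)).choose (m+1) : ℝ) * s^m * Ees A' (K-m) μ with hh
  have hgh : ∀ s : ℝ, Ees A' (K+1) (fun j => μ j + s) = s * h s := by
    intro s
    rw [Ees_shift (by omega : K + 1 ≤ A'.card) μ s, Finset.sum_range_succ']
    simp only [Nat.sub_zero, pow_zero, Nat.choose_zero_right, Nat.cast_one, one_mul, mul_one]
    rw [hf0, add_zero, hh, Finset.mul_sum]
    refine Finset.sum_congr rfl fun m hm => ?_
    have h1 : K + 1 - (m + 1) = K - m := by omega
    rw [h1]
    ring
  have hhc : Continuous h := by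
    rw [hh]
    exact continuous_finset_sum _ fun m _ =>
      ((continuous_const.mul (continuous_pow m)).mul continuous_const)
  have hh0val : h 0 = ((A'.card - (K+1) + 1).choose 1 : ℝ) * Ees A' K μ := by
    show (∑ m ∈ Finset.range (K+1),
      ((A'.card - (K+1) + (m+1)).choose (m+1) : ℝ) * (0:ℝ)^m * Ees A' (K-m) μ) = _
    rw [Finset.sum_eq_single_of_mem 0 (Finset.mem_range.2 (by omega))]
    · norm_num
    · intro m _ hm0
      rw [zero_pow hm0]; ring
  have hh0 : 0 < h 0 := by
    rw [hh0val, Nat.choose_one_right]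
    have h2 : 0 < Ees A' K μ := hμ' K (le_refl K)
    have h3 : (0:ℝ) < ((A'.card - (K+1) + 1 : ℕ) : ℝ) := by
      have : (0:ℕ) < A'.card - (K+1) + 1 := by omega
      exact_mod_cast this
    positivity
  obtain ⟨δ, hδ, hballh⟩ := cont_pos_near hhc hh0
  -- for 0 < s < δ, (μ + s) satisfies the Γ_{K+1} condition on A'
  have hsmallΓ : ∀ s : ℝ, 0 < s → s < δ → ∀ j, 1 ≤ j → j ≤ K + 1 →
      0 < Ees A' j (fun p => μ p + s) := by
    intro s hs0 hsδ j hj1 hj2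
    rcases Nat.lt_or_ge j (K+1) with hjK | hjK
    · refine Ees_shift_pos hs0.le (by omega) (hμ' j (by omega)) (fun m hm => ?_)
      rcases Nat.eq_zero_or_pos m with h0 | h1
      · subst h0; rw [Ees_zero]; norm_num
      · exact le_of_lt (hμ' m (by omega))
    · have hj : j = K + 1 := by omega
      subst hj
      rw [hgh s]
      have := hballh s (by rw [abs_lt]; constructor <;> linarith)
      positivity
  -- apply IH at level K+1 on A' to get nonneg limits
  have hlim : ∀ p ∈ A', 0 ≤ Ees (A'.erase p) K μ := by
    intro p hp
    by_contra hc
    push_neg at hc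
    have hcont : Continuous fun s : ℝ => Ees (A'.erase p) K (fun j => μ j + s) :=
      Ees_continuous (A'.erase p) K μ
    have h00 : (fun s : ℝ => Ees (A'.erase p) K (fun j => μ j + s)) 0 < 0 := by
      have : (fun j => μ j + (0:ℝ)) = μ := by funext j; ring
      simpa [this] using hc
    obtain ⟨ε, hε, hballe⟩ := cont_neg_near hcont h00
    set s : ℝ := min δ ε / 2 with hs
    have hs0 : 0 < s := by positivity
    have hsδ : s < δ := by
      have := min_le_left δ ε; rw [hs]; linarith
    have hsε : s < ε := by
      have := min_le_right δ ε; rw [hs]; linarith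
    have happly := IH (K+1) (by omega) A' (fun j => μ j + s) (by omega) (by omega)
      (hsmallΓ s hs0 hsδ) p hp
    simp only [Nat.add_sub_cancel] at happly
    have := hballe s (by rw [abs_lt]; constructor <;> linarith)
    linarith
  -- final contradiction
  have hsum := Ees_mul_card (ι := ι) (A := A') (K+1) μ
  have hterm : ∀ p ∈ A', μ p * Ees (A'.erase p) (K+1) μ = -(μ p^2 * Ees (A'.erase p) K μ) := by
    intro p hp
    have herase := Ees_erase hp K μ
    rw [hf0] at herase
    have : Ees (A'.erase p) (K+1) μ = -(μ p * Ees (A'.erase p) K μ) := by linarith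
    rw [this]; ring
  rw [Finset.sum_congr rfl hterm] at hsum
  have hle : ∑ p ∈ A', -(μ p^2 * Ees (A'.erase p) K μ) ≤ 0 := by
    refine Finset.sum_nonpos fun p hp => ?_
    have h1 := hlim p hp
    have h2 : (0:ℝ) ≤ μ p ^ 2 := sq_nonneg _
    nlinarith
  rw [← hsum] at hle
  have : (0:ℝ) < ((K+1+1 : ℕ) : ℝ) * Ees A' (K+2) μ := by positivity
  linarith

end Aux

theorem esymDel_pos (n k : ℕ) (hk1 : 1 ≤ k) (hkn : k ≤ n) (l : Fin n → ℝ)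
    (h : GammaCone n k l) (i : Fin n) : 0 < esymDel n (k - 1) l i := by
  have hcard : (Finset.univ : Finset (Fin n)).card = n := by simp
  have key := Ees_key k (Finset.univ : Finset (Fin n)) l hk1 (by rw [hcard]; exact hkn)
    (fun j h1 h2 => h j h1 h2) i (Finset.mem_univ i)
  exact key
end

section
/- If λ ∈ Γ_k and the entries are ordered λ_1 ≥ λ_2 ≥ ⋯ ≥ λ_n, then the partial symmetric polynomials are ordered: σ_{k-1}(λ|1) ≤ σ_{k-1}(λ|2) ≤ ⋯ ≤ σ_{k-1}(λ|n). -/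
open Finset

namespace EsymAux
open Polynomial

set_option linter.unusedSectionVars false

lemma eval_pos (M : Multiset ℝ) (t : ℝ) (h : ∀ r ∈ M, r < t) :
    0 < ((M.map fun a => (X : ℝ[X]) - C a).prod).eval t := by
  rw [eval_multiset_prod, Multiset.map_map]
  apply Multiset.prod_pos
  intro x hx
  obtain ⟨r, hr, rfl⟩ := Multiset.mem_map.1 hx
  simp only [Function.comp_apply, eval_sub, eval_X, eval_C, sub_pos]
  exact h r hr

lemma eval_nonneg (M : Multiset ℝ) (t : ℝ) (h : ∀ r ∈ M, r ≤ t) :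
    0 ≤ ((M.map fun a => (X : ℝ[X]) - C a).prod).eval t := by
  rw [eval_multiset_prod, Multiset.map_map]
  apply Multiset.prod_nonneg
  intro x hx
  obtain ⟨r, hr, rfl⟩ := Multiset.mem_map.1 hx
  simp only [Function.comp_apply, eval_sub, eval_X, eval_C, sub_nonneg]
  exact h r hr

lemma deriv_eval (M : Multiset ℝ) (t : ℝ) :
    (∀ r ∈ M, r < t) →
      0 ≤ (derivative (M.map fun a => (X : ℝ[X]) - C a).prod).eval t ∧
      (M ≠ 0 → 0 < (derivative (M.map fun a => (X : ℝ[X]) - C a).prod).eval t) := by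
  induction M using Multiset.induction_on with
  | empty => intro _; simp
  | cons a s ih =>
    intro h
    have h1 := eval_pos s t (fun r hr => h r (Multiset.mem_cons_of_mem hr))
    have h2 := (ih (fun r hr => h r (Multiset.mem_cons_of_mem hr))).1
    have ha : a < t := h a (Multiset.mem_cons_self a s)
    rw [Multiset.map_cons, Multiset.prod_cons, derivative_mul, derivative_sub,
      derivative_X, derivative_C, sub_zero, one_mul, eval_add, eval_mul, eval_sub,
      eval_X, eval_C]
    constructor
    · nlinarith
    · intro _; nlinarith

lemma coeff_pos (M : Multiset ℝ) :
    (∀ r ∈ M, r < 0) →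
      (∀ d, 0 ≤ ((M.map fun a => (X : ℝ[X]) - C a).prod).coeff d) ∧
      (∀ d ≤ Multiset.card M, 0 < ((M.map fun a => (X : ℝ[X]) - C a).prod).coeff d) := by
  induction M using Multiset.induction_on with
  | empty =>
    intro _
    constructor
    · intro d; rw [Multiset.map_zero, Multiset.prod_zero, coeff_one]
      split <;> norm_num
    · intro d hd
      simp only [Multiset.card_zero, Nat.le_zero] at hd
      subst hd
      rw [Multiset.map_zero, Multiset.prod_zero, coeff_one]; norm_num
  | cons a s ih =>
    intro h
    obtain ⟨ihn, ihp⟩ := ih (fun r hr => h r (Multiset.mem_cons_of_mem hr))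
    have ha : 0 < -a := by
      have := h a (Multiset.mem_cons_self a s); linarith
    rw [Multiset.map_cons, Multiset.prod_cons]
    set P := (s.map fun a => (X : ℝ[X]) - C a).prod with hP
    have key : ∀ d, ((X - C a) * P).coeff d = (X * P).coeff d - a * P.coeff d := by
      intro d; rw [sub_mul, coeff_sub, coeff_C_mul]
    constructor
    · intro d
      rw [key]
      cases d with
      | zero =>
        rw [mul_coeff_zero, coeff_X_zero, zero_mul]
        have := mul_nonneg ha.le (ihn 0)
        linarith
      | succ e =>
        rw [coeff_X_mul]
        have h1 := ihn e
        have h2 := mul_nonneg ha.le (ihn (e + 1))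
        linarith
    · intro d hd
      rw [key]
      cases d with
      | zero =>
        rw [mul_coeff_zero, coeff_X_zero, zero_mul]
        have := mul_pos ha (ihp 0 (Nat.zero_le _))
        linarith
      | succ e =>
        rw [coeff_X_mul]
        rw [Multiset.card_cons] at hd
        have h1 := ihp e (by omega)
        have h2 := mul_nonneg ha.le (ihn (e + 1))
        linarith

def RealRooted (p : ℝ[X]) : Prop := Multiset.card p.roots = p.natDegree

lemma rr_deriv {p : ℝ[X]} (hp : RealRooted p) : RealRooted (derivative p) := by
  rcases Nat.eq_zero_or_pos p.natDegree with h0 | h1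
  · rw [derivative_of_natDegree_zero h0]
    simp [RealRooted]
  · have hd : (derivative p).natDegree = p.natDegree - 1 :=
      natDegree_eq_of_degree_eq_some (degree_derivative_eq p h1)
    have h2 := card_roots_le_derivative p
    have h3 := card_roots' (derivative p)
    unfold RealRooted at *
    omega

lemma rr_iter (p : ℝ[X]) (hp : RealRooted p) (j : ℕ) : RealRooted (derivative^[j] p) := by
  induction j with
  | zero => exact hp
  | succ e ih => rw [Function.iterate_succ_apply']; exact rr_deriv ih

lemma natDegree_iter (p : ℝ[X]) : ∀ j : ℕ, j ≤ p.natDegree →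
    (derivative^[j] p).natDegree = p.natDegree - j := by
  intro j
  induction j with
  | zero => intro _; simp
  | succ e ih =>
    intro hj
    have he := ih (by omega)
    have h1 : 0 < (derivative^[e] p).natDegree := by omega
    rw [Function.iterate_succ_apply',
      natDegree_eq_of_degree_eq_some (degree_derivative_eq _ h1), he]
    omega

lemma leib (a : ℝ) (g : ℝ[X]) : ∀ m : ℕ, derivative^[m] ((X + C a) * g)
    = (X + C a) * derivative^[m] g + (m : ℝ[X]) * derivative^[m - 1] g := by
  intro m
  induction m with
  | zero => simp
  | succ e ih =>
    rw [Function.iterate_succ_apply', ih, derivative_add, derivative_mul, derivative_mul,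
      derivative_X_add_C, derivative_natCast, zero_mul, one_mul,
      ← Function.iterate_succ_apply' derivative e g]
    cases e with
    | zero => simp; ring
    | succ f =>
      have h2 : f + 1 - 1 = f := by omega
      have h3 : f + 1 + 1 - 1 = f + 1 := by omega
      rw [h2, h3, ← Function.iterate_succ_apply' derivative f g]
      push_cast
      ring


variable {ι : Type*} [DecidableEq ι]

lemma prodlin_monic (u : Finset ι) (l : ι → ℝ) :
    (∏ j ∈ u, ((X : ℝ[X]) + C (l j))).Monic :=
  monic_prod_of_monic u _ (fun j _ => monic_X_add_C (l j))

lemma prodlin_natDegree (u : Finset ι) (l : ι → ℝ) :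
    (∏ j ∈ u, ((X : ℝ[X]) + C (l j))).natDegree = u.card := by
  rw [natDegree_prod_of_monic u _ (fun j _ => monic_X_add_C (l j))]
  simp [natDegree_X_add_C]

lemma prodlin_rr (u : Finset ι) (l : ι → ℝ) :
    RealRooted (∏ j ∈ u, ((X : ℝ[X]) + C (l j))) := by
  unfold RealRooted
  rw [prodlin_natDegree, roots_prod _ _ (prodlin_monic u l).ne_zero, Multiset.card_bind]
  have h1 : ∀ j ∈ u.val, Multiset.card ((X + C (l j)).roots) = 1 := by
    intro j _
    have : (X : ℝ[X]) + C (l j) = X - C (-(l j)) := by rw [map_neg, sub_neg_eq_add]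
    rw [this, roots_X_sub_C]
    simp
  have h2 : Multiset.map (Multiset.card ∘ fun i => (X + C (l i)).roots) u.val
      = Multiset.map (fun _ => (1:ℕ)) u.val := Multiset.map_congr rfl h1
  rw [h2]
  simp [Multiset.map_const']

lemma core (s : Finset ι) (l : ι → ℝ) (k : ℕ) (hk1 : 1 ≤ k) (hks : k ≤ s.card)
    (hpos : ∀ m : ℕ, 1 ≤ m → m ≤ k → 0 < ∑ t ∈ s.powersetCard m, ∏ x ∈ t, l x)
    (i : ι) (hi : i ∈ s) :
    ∀ m : ℕ, m ≤ k - 1 → 0 < ∑ t ∈ (s.erase i).powersetCard m, ∏ x ∈ t, l x := by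
  set N := s.card with hN
  set M := N - k with hM
  set g : ℝ[X] := ∏ j ∈ s.erase i, (X + C (l j)) with hg
  set h : ℝ[X] := ∏ j ∈ s, (X + C (l j)) with hh
  have hfac : h = (X + C (l i)) * g := by rw [hh, hg, ← Finset.mul_prod_erase s _ hi]
  have hcard : (s.erase i).card = N - 1 := by rw [Finset.card_erase_of_mem hi]
  have hgdeg : g.natDegree = N - 1 := by rw [hg, prodlin_natDegree, hcard]
  have hhdeg : h.natDegree = N := by rw [hh, prodlin_natDegree]
  have hmon : h.Monic := by rw [hh]; exact prodlin_monic s l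
  have hgmon : g.Monic := by rw [hg]; exact prodlin_monic _ l
  have hgrr : RealRooted g := by rw [hg]; exact prodlin_rr _ l
  have hN1 : 1 ≤ N := le_trans hk1 hks
  have hMN : M ≤ N - 1 := by omega
  -- coefficients of h in the relevant range are positive
  have hhc : ∀ d, M ≤ d → d ≤ N → 0 < h.coeff d := by
    intro d h1 h2
    rcases eq_or_lt_of_le h2 with heq | h3
    · have hc1 : h.coeff d = 1 := by
        rw [heq, ← hhdeg]; exact hmon.coeff_natDegree
      rw [hc1]; norm_num
    · rw [hh, Finset.prod_X_add_C_coeff s l (le_of_lt h3)]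
      exact hpos (N - d) (by omega) (by omega)
  -- the M-th derivative of h is positive on [0, ∞)
  have hHpos : ∀ t : ℝ, 0 ≤ t → 0 < (derivative^[M] h).eval t := by
    intro t ht
    rw [eval_eq_sum_range]
    apply Finset.sum_pos'
    · intro d _
      rw [coeff_iterate_derivative, nsmul_eq_mul]
      rcases le_or_gt (d + M) N with hle | hlt
      · have := hhc (d + M) (by omega) hle
        have ht' := pow_nonneg ht d
        positivity
      · rw [coeff_eq_zero_of_natDegree_lt (by omega : h.natDegree < d + M)]
        simp
    · refine ⟨0, Finset.mem_range.2 (by omega), ?_⟩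
      rw [pow_zero, mul_one, coeff_iterate_derivative, zero_add, nsmul_eq_mul]
      have h1 := hhc M (le_refl M) (by omega)
      have h2 : 0 < M.descFactorial M :=
        Nat.pos_of_ne_zero (fun hz => by
          rw [Nat.descFactorial_eq_zero_iff_lt] at hz; omega)
      have h2' : (0:ℝ) < (M.descFactorial M : ℝ) := by exact_mod_cast h2
      exact mul_pos h2' h1
  set G := derivative^[M] g with hG
  set G1 := derivative^[M - 1] g with hG1
  have hGrr : RealRooted G := rr_iter g hgrr M
  have hG1rr : RealRooted G1 := rr_iter g hgrr (M - 1)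
  have hGdeg : G.natDegree = k - 1 := by
    rw [hG, natDegree_iter g M (by rw [hgdeg]; omega), hgdeg]; omega
  have hGlead : 0 < G.leadingCoeff := by
    rw [leadingCoeff, hGdeg, hG, coeff_iterate_derivative, nsmul_eq_mul]
    have e1 : k - 1 + M = N - 1 := by omega
    rw [e1]
    have hc1 : g.coeff (N - 1) = 1 := by
      conv_lhs => rw [show N - 1 = g.natDegree from hgdeg.symm]
      exact hgmon.coeff_natDegree
    rw [hc1, mul_one]
    have h2 : 0 < (N - 1).descFactorial M :=
      Nat.pos_of_ne_zero (fun hz => by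
        rw [Nat.descFactorial_eq_zero_iff_lt] at hz; omega)
    exact_mod_cast h2
  have hG0 : G ≠ 0 := leadingCoeff_ne_zero.1 (ne_of_gt hGlead)
  have hfacG := C_leadingCoeff_mul_prod_multiset_X_sub_C (p := G) hGrr
  have hGcard : Multiset.card G.roots = k - 1 := by
    have := hGrr; unfold RealRooted at this; omega
  -- all roots of G are negative
  have hroots : ∀ x ∈ G.roots, x < 0 := by
    by_contra hcon
    push_neg at hcon
    obtain ⟨x, hx, hx0⟩ := hcon
    have hne : G.roots.toFinset.Nonempty := ⟨x, Multiset.mem_toFinset.2 hx⟩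
    set sm := G.roots.toFinset.max' hne with hsm
    have hsm_mem : sm ∈ G.roots := Multiset.mem_toFinset.1 (G.roots.toFinset.max'_mem hne)
    have hsm0 : 0 ≤ sm := le_trans hx0 (Finset.le_max' _ x (Multiset.mem_toFinset.2 hx))
    have hub : ∀ r ∈ G.roots, r ≤ sm := fun r hr => Finset.le_max' _ r (Multiset.mem_toFinset.2 hr)
    have hGev : G.eval sm = 0 := (mem_roots'.1 hsm_mem).2
    have hHs := hHpos sm hsm0
    rcases Nat.eq_zero_or_pos M with hM0 | hM1
    · rw [hM0] at hHs
      rw [Function.iterate_zero_apply, hfac, eval_mul] at hHs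
      have hGg : G = g := by rw [hG, hM0, Function.iterate_zero_apply]
      rw [hGg] at hGev
      rw [hGev, mul_zero] at hHs
      exact lt_irrefl _ hHs
    · rw [hfac, leib (l i) g M] at hHs
      simp only [eval_add, eval_mul, eval_X, eval_C, eval_natCast] at hHs
      rw [← hG, ← hG1] at hHs
      rw [hGev, mul_zero, zero_add] at hHs
      have hMR : (0:ℝ) < (M:ℝ) := by exact_mod_cast hM1
      have hG1pos : 0 < G1.eval sm := by nlinarith
      have hG1deg : G1.natDegree = k := by
        rw [hG1, natDegree_iter g (M - 1) (by rw [hgdeg]; omega), hgdeg]; omega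
      have hG1card : Multiset.card G1.roots = k := by
        have := hG1rr; unfold RealRooted at this; omega
      have hG1rne : G1.roots ≠ 0 := by
        intro hz; rw [hz] at hG1card; simp at hG1card; omega
      have hG1ne : G1.roots.toFinset.Nonempty := Multiset.toFinset_nonempty.2 hG1rne
      set sm' := G1.roots.toFinset.max' hG1ne with hsm'
      have hsm'_mem : sm' ∈ G1.roots := Multiset.mem_toFinset.1 (Finset.max'_mem _ _)
      have hub' : ∀ r ∈ G1.roots, r ≤ sm' := fun r hr =>
        Finset.le_max' _ r (Multiset.mem_toFinset.2 hr)
      have hG1ev : G1.eval sm' = 0 := (mem_roots'.1 hsm'_mem).2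
      have hGG1 : G = derivative G1 := by
        rw [hG, hG1, ← Function.iterate_succ_apply' derivative (M - 1) g]
        congr 1; omega
      have hG1lead : 0 < G1.leadingCoeff := by
        rw [leadingCoeff, hG1deg, hG1, coeff_iterate_derivative, nsmul_eq_mul]
        have e1 : k + (M - 1) = N - 1 := by omega
        rw [e1]
        have hc1 : g.coeff (N - 1) = 1 := by
          conv_lhs => rw [show N - 1 = g.natDegree from hgdeg.symm]
          exact hgmon.coeff_natDegree
        rw [hc1, mul_one]
        have h2 : 0 < (N - 1).descFactorial (M - 1) :=
          Nat.pos_of_ne_zero (fun hz => by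
            rw [Nat.descFactorial_eq_zero_iff_lt] at hz; omega)
        exact_mod_cast h2
      have hfacG1 := C_leadingCoeff_mul_prod_multiset_X_sub_C (p := G1) hG1rr
      rcases lt_or_ge sm' sm with hss | hss
      · have hall : ∀ r ∈ G1.roots, r < sm := fun r hr => lt_of_le_of_lt (hub' r hr) hss
        have hd := (deriv_eval G1.roots sm hall).2 hG1rne
        have hcontra : G.eval sm
            = G1.leadingCoeff * (derivative (G1.roots.map fun a => (X:ℝ[X]) - C a).prod).eval sm := by
          rw [hGG1]
          conv_lhs => rw [← hfacG1]
          rw [derivative_C_mul, eval_mul, eval_C]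
        rw [hGev] at hcontra
        nlinarith [mul_pos hG1lead hd]
      · have hGnn : ∀ y, sm ≤ y → 0 ≤ G.eval y := by
          intro y hy
          conv_rhs => rw [← hfacG]
          rw [eval_mul, eval_C]
          exact mul_nonneg hGlead.le
            (eval_nonneg G.roots y (fun r hr => le_trans (hub r hr) hy))
        have hmono : MonotoneOn (fun x => G1.eval x) (Set.Ici sm) := by
          apply monotoneOn_of_deriv_nonneg (convex_Ici sm)
          · exact (Polynomial.continuous G1).continuousOn
          · exact (Polynomial.differentiable G1).differentiableOn
          · intro y hy
            rw [Polynomial.deriv, ← hGG1]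
            rw [interior_Ici] at hy
            exact hGnn y (le_of_lt hy)
        have hle2 := hmono Set.self_mem_Ici (Set.mem_Ici.2 hss) hss
        simp only at hle2
        rw [hG1ev] at hle2
        linarith
  -- conclude: coefficients of G, hence of g, are positive
  intro m hm
  have hcp := (coeff_pos G.roots hroots).2
  have h1 : 0 < G.coeff (k - 1 - m) := by
    conv_rhs => rw [← hfacG]
    rw [coeff_C_mul]
    exact mul_pos hGlead (hcp _ (by omega))
  rw [hG, coeff_iterate_derivative, nsmul_eq_mul] at h1
  have hdf : (0:ℝ) ≤ ((k - 1 - m + M).descFactorial M : ℝ) := by positivity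
  have h2 : 0 < g.coeff (k - 1 - m + M) := by nlinarith
  rw [hg, Finset.prod_X_add_C_coeff (s.erase i) l (by rw [hcard]; omega)] at h2
  have e3 : (s.erase i).card - (k - 1 - m + M) = m := by rw [hcard]; omega
  rw [e3] at h2
  exact h2

lemma esym_split (s : Finset ι) (l : ι → ℝ) (j : ι) (hj : j ∈ s) (m : ℕ)
    (hm1 : 1 ≤ m) (hms : m ≤ s.card) :
    ∑ t ∈ s.powersetCard m, ∏ x ∈ t, l x
      = (∑ t ∈ (s.erase j).powersetCard m, ∏ x ∈ t, l x)
        + l j * ∑ t ∈ (s.erase j).powersetCard (m - 1), ∏ x ∈ t, l x := by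
  have hcard : (s.erase j).card = s.card - 1 := Finset.card_erase_of_mem hj
  have h1 : 1 ≤ s.card := le_trans hm1 hms
  set q := ∏ x ∈ s.erase j, ((X : ℝ[X]) + C (l x)) with hq
  have hfac : (∏ x ∈ s, ((X : ℝ[X]) + C (l x))) = (X + C (l j)) * q :=
    (Finset.mul_prod_erase s _ hj).symm
  have hL : (∏ x ∈ s, ((X : ℝ[X]) + C (l x))).coeff (s.card - m)
      = ∑ t ∈ s.powersetCard m, ∏ x ∈ t, l x := by
    have e : s.card - (s.card - m) = m := by omega
    rw [Finset.prod_X_add_C_coeff s l (by omega), e]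
  have hR2 : q.coeff (s.card - m)
      = ∑ t ∈ (s.erase j).powersetCard (m - 1), ∏ x ∈ t, l x := by
    rw [hq, Finset.prod_X_add_C_coeff _ l (by rw [hcard]; omega), hcard]
    have e : s.card - 1 - (s.card - m) = m - 1 := by omega
    rw [e]
  have hR1 : (X * q).coeff (s.card - m)
      = ∑ t ∈ (s.erase j).powersetCard m, ∏ x ∈ t, l x := by
    rcases Nat.eq_zero_or_pos (s.card - m) with h0 | hpos0
    · rw [h0, mul_coeff_zero, coeff_X_zero, zero_mul]
      have hempty : (s.erase j).powersetCard m = ∅ :=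
        Finset.powersetCard_eq_empty.2 (by omega)
      rw [hempty, Finset.sum_empty]
    · have he : s.card - m = (s.card - m - 1) + 1 := by omega
      rw [he, coeff_X_mul, hq, Finset.prod_X_add_C_coeff _ l (by rw [hcard]; omega), hcard]
      have e : s.card - 1 - (s.card - m - 1) = m := by omega
      rw [e]
  calc ∑ t ∈ s.powersetCard m, ∏ x ∈ t, l x
      = (∏ x ∈ s, ((X : ℝ[X]) + C (l x))).coeff (s.card - m) := hL.symm
    _ = (X * q + C (l j) * q).coeff (s.card - m) := by rw [hfac, add_mul]
    _ = (X * q).coeff (s.card - m) + l j * q.coeff (s.card - m) := by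
        rw [coeff_add, coeff_C_mul]
    _ = _ := by rw [hR1, hR2]

end EsymAux

theorem esymDel_mono (n k : ℕ) (hk1 : 1 ≤ k) (hkn : k ≤ n) (l : Fin n → ℝ)
    (hord : ∀ i j : Fin n, i ≤ j → l j ≤ l i) (h : GammaCone n k l)
    (i j : Fin n) (hij : i ≤ j) :
    esymDel n (k - 1) l i ≤ esymDel n (k - 1) l j := by
  rcases eq_or_lt_of_le hk1 with hk1' | hk2
  · have hk0 : k - 1 = 0 := by omega
    rw [hk0]
    unfold esymDel
    rw [Finset.powersetCard_zero, Finset.powersetCard_zero]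
  · rcases eq_or_ne i j with rfl | hij'
    · exact le_refl _
    have hji : j ∈ (univ : Finset (Fin n)).erase i :=
      Finset.mem_erase.2 ⟨fun hh => hij' hh.symm, mem_univ j⟩
    have hijE : i ∈ (univ : Finset (Fin n)).erase j :=
      Finset.mem_erase.2 ⟨hij', mem_univ i⟩
    have hcardU : (univ : Finset (Fin n)).card = n := Finset.card_fin n
    have hcardUi : ((univ : Finset (Fin n)).erase i).card = n - 1 := by
      rw [Finset.card_erase_of_mem (mem_univ i), hcardU]
    have hcardUj : ((univ : Finset (Fin n)).erase j).card = n - 1 := by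
      rw [Finset.card_erase_of_mem (mem_univ j), hcardU]
    have e1 := EsymAux.esym_split ((univ : Finset (Fin n)).erase i) l j hji (k - 1)
      (by omega) (by rw [hcardUi]; omega)
    have e2 := EsymAux.esym_split ((univ : Finset (Fin n)).erase j) l i hijE (k - 1)
      (by omega) (by rw [hcardUj]; omega)
    have c1 := EsymAux.core (univ : Finset (Fin n)) l k hk1 (by rw [hcardU]; exact hkn)
      (fun m hm1 hmk => by
        have := h m hm1 hmk
        unfold esym at this
        exact this)
      j (mem_univ j)
    have c2 := EsymAux.core ((univ : Finset (Fin n)).erase j) l (k - 1) (by omega)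
      (by rw [hcardUj]; omega)
      (fun m hm1 hmk => c1 m (by omega))
      i hijE
    have Epos := c2 (k - 1 - 1) (le_refl _)
    have hcomm : ((univ : Finset (Fin n)).erase i).erase j
        = ((univ : Finset (Fin n)).erase j).erase i := Finset.erase_right_comm
    unfold esymDel
    rw [e1, e2, hcomm]
    have hord' := hord i j hij
    nlinarith [Epos, hord']
end

section
/- If λ ∈ Γ_k with ordered entries λ_1 ≥ λ_2 ≥ ⋯ ≥ λ_n, then λ_1 · σ_{k-1}(λ|1) ≥ (k/n) · σ_k(λ). -/
open Finset

open Polynomial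


noncomputable def esymF {n : ℕ} (l : Fin n → ℝ) (t : Finset (Fin n)) (j : ℕ) : ℝ :=
  ∑ s ∈ t.powersetCard j, ∏ x ∈ s, l x

lemma esymF_zero {n : ℕ} (l : Fin n → ℝ) (t : Finset (Fin n)) : esymF l t 0 = 1 := by
  simp [esymF]

lemma esymF_of_card_lt {n : ℕ} (l : Fin n → ℝ) {t : Finset (Fin n)} {j : ℕ} (h : t.card < j) :
    esymF l t j = 0 := by
  rw [esymF, Finset.powersetCard_eq_empty.mpr h, sum_empty]

lemma esymF_insert {n : ℕ} (l : Fin n → ℝ) {x : Fin n} {t : Finset (Fin n)} (hx : x ∉ t) (j : ℕ) :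
    esymF l (insert x t) (j+1) = l x * esymF l t j + esymF l t (j+1) := by
  rw [esymF, powersetCard_succ_insert hx, sum_union, add_comm]
  · congr 1
    rw [Finset.sum_image (fun s hs s' hs' hss' => ?inj), esymF, mul_sum]
    · refine sum_congr rfl fun s hs => ?_
      rw [prod_insert (fun h => hx ((mem_powersetCard.mp hs).1 h))]
    case inj =>
      have h1 : x ∉ s := fun h => hx ((mem_powersetCard.mp hs).1 h)
      have h2 : x ∉ s' := fun h => hx ((mem_powersetCard.mp hs').1 h)
      rw [← erase_insert h1, ← erase_insert h2, hss']
  · rw [Finset.disjoint_right]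
    rintro s hs hs2
    obtain ⟨u, hu, rfl⟩ := mem_image.mp hs
    exact (fun h => hx ((mem_powersetCard.mp hs2).1 h)) (mem_insert_self x u)

lemma esymF_erase {n : ℕ} (l : Fin n → ℝ) {i : Fin n} {t : Finset (Fin n)} (hi : i ∈ t) (j : ℕ) :
    esymF l t (j+1) = l i * esymF l (t.erase i) j + esymF l (t.erase i) (j+1) := by
  conv_lhs => rw [← insert_erase hi]
  exact esymF_insert l (notMem_erase i t) j

lemma esymF_eq_coeff {n : ℕ} (l : Fin n → ℝ) {t : Finset (Fin n)} {j : ℕ} (hj : j ≤ t.card) :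
    (∏ x ∈ t, (X + C (l x))).coeff (t.card - j) = esymF l t j := by
  rw [Finset.prod_X_add_C_coeff _ _ (Nat.sub_le _ _), Nat.sub_sub_self hj]; rfl

lemma natDegree_prodXC {n : ℕ} (l : Fin n → ℝ) (t : Finset (Fin n)) :
    (∏ x ∈ t, (X + C (l x))).natDegree = t.card := by
  rw [natDegree_prod_of_monic _ _ (fun x _ => monic_X_add_C _)]
  simp

lemma esymF_shift {n : ℕ} (l : Fin n → ℝ) (c : ℝ) {t : Finset (Fin n)} {j : ℕ} (hj : j ≤ t.card) :
    esymF (fun x => l x + c) t j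
      = ∑ i ∈ Finset.range (j+1),
          ((i + (t.card - j)).choose (t.card - j) : ℝ) * esymF l t (j - i) * c^i := by
  have hP : (∏ x ∈ t, (X + C (l x + c))) = (∏ x ∈ t, (X + C (l x))).comp (X + C c) := by
    rw [Polynomial.comp, Polynomial.eval₂_finset_prod]
    refine Finset.prod_congr rfl fun x _ => ?_
    simp only [eval₂_add, eval₂_X, eval₂_C, map_add]
    ring
  have h1 : esymF (fun x => l x + c) t j
      = (∏ x ∈ t, (X + C (l x + c))).coeff (t.card - j) := (esymF_eq_coeff _ hj).symm
  rw [h1, hP, ← taylor_apply, taylor_coeff]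
  have hdeg : (hasseDeriv (t.card - j) (∏ x ∈ t, (X + C (l x)))).natDegree < j + 1 := by
    refine lt_of_le_of_lt ((natDegree_hasseDeriv_le _ _).trans ?_) (Nat.lt_succ_self j)
    rw [natDegree_prodXC]
    omega
  rw [eval_eq_sum_range' hdeg]
  refine Finset.sum_congr rfl fun i hi => ?_
  rw [hasseDeriv_coeff]
  have hij : i ≤ j := Nat.lt_succ_iff.mp (Finset.mem_range.mp hi)
  have : i + (t.card - j) = t.card - (j - i) := by omega
  rw [this, esymF_eq_coeff l (by omega : j - i ≤ t.card)]

lemma esymF_one {n : ℕ} (l : Fin n → ℝ) (t : Finset (Fin n)) :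
    esymF l t 1 = ∑ x ∈ t, l x := by
  rw [esymF, powersetCard_one, sum_map]
  simp

lemma esymF_two {n : ℕ} (l : Fin n → ℝ) (t : Finset (Fin n)) :
    2 * esymF l t 2 = (∑ x ∈ t, l x)^2 - ∑ x ∈ t, (l x)^2 := by
  classical
  induction t using Finset.induction_on with
  | empty => simp [esymF_of_card_lt l (by simp : (∅ : Finset (Fin n)).card < 2)]
  | @insert x t hx ih =>
    have h2 : esymF l (insert x t) 2 = l x * esymF l t 1 + esymF l t 2 := esymF_insert l hx 1
    rw [h2, esymF_one, sum_insert hx, sum_insert hx]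
    linear_combination ih

lemma fin_final (m : ℕ) (f : Fin m → ℝ) (hk2 : 2 ≤ m) (h1 : esymF f univ (m-1) = 0) :
    esymF f univ m * esymF f univ (m-2) ≤ 0 := by
  classical
  have hcard : (univ : Finset (Fin m)).card = m := by simp
  by_cases h0 : ∃ i, f i = 0
  · obtain ⟨i, hi⟩ := h0
    have hps : powersetCard m (univ : Finset (Fin m)) = {univ} := by
      have h' := Finset.powersetCard_self (univ : Finset (Fin m))
      rwa [hcard] at h'
    have : esymF f univ m = 0 := by
      rw [esymF, hps, sum_singleton]
      exact prod_eq_zero (mem_univ i) hi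
    rw [this, zero_mul]
  · push_neg at h0
    have hprodne : (∏ i, f i) ≠ 0 := prod_ne_zero_iff.mpr fun i _ => h0 i
    have key : ∀ j, j ≤ m → esymF f univ (m - j) = (∏ i, f i) * esymF (fun i => (f i)⁻¹) univ j := by
      intro j hj
      rw [esymF, esymF, mul_sum]
      refine sum_nbij' (fun s => sᶜ) (fun s => sᶜ) ?_ ?_ ?_ ?_ ?_
      · intro s hs
        rw [mem_powersetCard_univ] at hs ⊢
        rw [card_compl, hs]
        simp
        omega
      · intro s hs
        rw [mem_powersetCard_univ] at hs ⊢
        rw [card_compl, hs]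
        simp
      · intro s _; exact compl_compl s
      · intro s _; exact compl_compl s
      · intro s hs
        have hcompl := prod_mul_prod_compl s f
        have hne : (∏ x ∈ sᶜ, f x) ≠ 0 := prod_ne_zero_iff.mpr fun i _ => h0 i
        rw [prod_inv_distrib]
        field_simp
        linear_combination hcompl
    have hS : esymF (fun i => (f i)⁻¹) univ 1 = 0 := by
      have hk := key 1 (by omega)
      rw [h1] at hk
      exact by
        have := hk.symm
        rcases mul_eq_zero.mp this with h | h
        · exact absurd h hprodne
        · exact h
    have hE2 : esymF (fun i => (f i)⁻¹) univ 2 ≤ 0 := by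
      have h2 := esymF_two (fun i => (f i)⁻¹) univ
      rw [esymF_one] at hS
      rw [hS] at h2
      nlinarith [Finset.sum_nonneg (fun x (_ : x ∈ (univ : Finset (Fin m))) => sq_nonneg ((f x)⁻¹))]
    have hm0 : esymF f univ m = ∏ i, f i := by
      have := key 0 (by omega)
      simpa [esymF_zero] using this
    have hm2 : esymF f univ (m - 2) = (∏ i, f i) * esymF (fun i => (f i)⁻¹) univ 2 := key 2 hk2
    rw [hm0, hm2]
    calc (∏ i, f i) * ((∏ i, f i) * esymF (fun i => (f i)⁻¹) univ 2)
        = (∏ i, f i)^2 * esymF (fun i => (f i)⁻¹) univ 2 := by ring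
      _ ≤ 0 := mul_nonpos_of_nonneg_of_nonpos (sq_nonneg _) hE2

lemma esymm_toFun (r : Multiset ℝ) (j : ℕ) :
    r.esymm j = esymF (fun i : Fin r.toList.length => r.toList.get i) univ j := by
  have h1 : (univ : Finset (Fin r.toList.length)).val.map (fun i => r.toList.get i) = r := by
    rw [Fin.univ_def]
    dsimp only
    rw [Multiset.map_coe]
    rw [show (List.map (fun i => r.toList.get i) (List.finRange r.toList.length)) = r.toList from
      List.map_get_finRange r.toList]
    exact r.coe_toList
  rw [esymF, ← Finset.esymm_map_val, h1]

lemma multiset_final (r : Multiset ℝ) (k : ℕ) (hk2 : 2 ≤ k) (hcard : Multiset.card r = k)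
    (h1 : r.esymm (k-1) = 0) : r.esymm k * r.esymm (k-2) ≤ 0 := by
  have hlen : r.toList.length = k := by rw [Multiset.length_toList, hcard]
  set f := fun i : Fin r.toList.length => r.toList.get i with hf
  have hh1 : esymF f univ (r.toList.length - 1) = 0 := by
    calc esymF f univ (r.toList.length - 1) = esymF f univ (k-1) := congrArg _ (by omega)
      _ = r.esymm (k-1) := (esymm_toFun r (k-1)).symm
      _ = 0 := h1
  have hfin := fin_final r.toList.length f (by omega) hh1
  calc r.esymm k * r.esymm (k-2)
      = esymF f univ k * esymF f univ (k-2) := by rw [← esymm_toFun, ← esymm_toFun]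
    _ = esymF f univ r.toList.length * esymF f univ (r.toList.length - 2) := by
        rw [congrArg (esymF f univ) (show k = r.toList.length by omega),
          congrArg (esymF f univ) (show k - 2 = r.toList.length - 2 by omega)]
    _ ≤ 0 := hfin

lemma rr_iterate (p : ℝ[X]) (hroots : Multiset.card p.roots = p.natDegree) (j : ℕ) :
    j ≤ p.natDegree →
      Multiset.card (derivative^[j] p).roots = (derivative^[j] p).natDegree ∧
      (derivative^[j] p).natDegree = p.natDegree - j := by
  induction j with
  | zero => exact fun _ => ⟨hroots, by simp⟩
  | succ j ih =>
    intro hj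
    obtain ⟨h1, h2⟩ := ih (by omega)
    rw [Function.iterate_succ_apply']
    set q := derivative^[j] p with hq
    have hnd : (derivative q).natDegree ≤ p.natDegree - (j+1) := by
      have := natDegree_derivative_le q
      omega
    have hlow : p.natDegree - (j+1) ≤ Multiset.card (derivative q).roots := by
      have := card_roots_le_derivative q
      omega
    have hcr : Multiset.card (derivative q).roots ≤ (derivative q).natDegree := card_roots' _
    omega

lemma newton_special (s : Multiset ℝ) (k : ℕ) (hk2 : 2 ≤ k) (hks : k ≤ Multiset.card s)
    (h1 : s.esymm (k-1) = 0) (h2 : 0 < s.esymm (k-2)) : s.esymm k ≤ 0 := by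
  set m := Multiset.card s with hm
  set P := (s.map fun a => X + C a).prod with hP
  have hPm : P.Monic := monic_multiset_prod_of_monic _ _ (fun a _ => monic_X_add_C a)
  have hPd : P.natDegree = m := by
    rw [hP, natDegree_multiset_prod_of_monic _ (fun f hf => by
      obtain ⟨a, _, rfl⟩ := Multiset.mem_map.mp hf; exact monic_X_add_C a)]
    simp [Multiset.map_map, hm]
  have hProots : P.roots = s.map (fun a => -a) := by
    have : P = ((s.map (fun a => -a)).map (fun a => X - C a)).prod := by
      rw [hP, Multiset.map_map]
      exact congrArg Multiset.prod (Multiset.map_congr rfl (fun a _ => by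
        show X + C a = X - C (-a)
        rw [map_neg, sub_neg_eq_add]))
    rw [this, roots_multiset_prod_X_sub_C]
  have hRc : Multiset.card P.roots = P.natDegree := by
    rw [hProots, Multiset.card_map, hPd]
  obtain ⟨hq1, hq2⟩ := rr_iterate P hRc (m - k) (by omega)
  set q := derivative^[m - k] P with hqdef
  rw [hPd] at hq2
  have hqk : q.natDegree = k := by omega
  -- coefficients of q
  have hcoeff : ∀ i, i ≤ k → q.coeff i
      = ((i + (m-k)).descFactorial (m-k) : ℝ) * s.esymm (k - i) := by
    intro i hi
    rw [hqdef, coeff_iterate_derivative, hP,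
      Multiset.prod_X_add_C_coeff s (show i + (m-k) ≤ Multiset.card s by omega)]
    rw [show Multiset.card s - (i + (m-k)) = k - i by omega]
    simp [nsmul_eq_mul]
  -- leading coefficient positive
  have hdesc : ∀ a b : ℕ, b ≤ a → (0:ℝ) < (a.descFactorial b : ℝ) := fun a b h => by
    exact_mod_cast Nat.pos_of_ne_zero (fun hz => by
      have := Nat.descFactorial_eq_zero_iff_lt.mp hz; omega)
  have hlc : q.leadingCoeff = (m.descFactorial (m-k) : ℝ) := by
    rw [leadingCoeff, hqk, hcoeff k le_rfl, show k + (m - k) = m by omega, Nat.sub_self]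
    simp [Multiset.esymm, Multiset.powersetCard_zero_left]
  have hlcpos : (0:ℝ) < q.leadingCoeff := by
    rw [hlc]; exact hdesc m (m-k) (by omega)
  have hroots_coeff : ∀ i, i ≤ k → q.coeff i
      = q.leadingCoeff * (-1)^(k-i) * q.roots.esymm (k-i) := by
    intro i hi
    have h := Polynomial.coeff_eq_esymm_roots_of_card hq1 (show i ≤ q.natDegree by omega)
    rwa [hqk] at h
  have hcard_r : Multiset.card q.roots = k := by rw [hq1, hqk]
  have hr1 : q.roots.esymm (k-1) = 0 := by
    have e1 : q.coeff 1 = 0 := by rw [hcoeff 1 (by omega), h1, mul_zero]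
    have e2 := hroots_coeff 1 (by omega)
    rw [e1] at e2
    rcases mul_eq_zero.mp e2.symm with h | h
    · rcases mul_eq_zero.mp h with h' | h'
      · exact absurd h' (ne_of_gt hlcpos)
      · exact absurd h' (pow_ne_zero _ (by norm_num))
    · exact h
  have hmf := multiset_final q.roots k hk2 hcard_r hr1
  have hsign : (-1:ℝ)^(k-0) * (-1)^(k-2) = 1 := by
    rw [← pow_add, show (k-0) + (k-2) = 2*(k-1) by omega, pow_mul]
    norm_num
  have hprod : q.coeff 0 * q.coeff 2 ≤ 0 := by
    rw [hroots_coeff 0 (by omega), hroots_coeff 2 hk2]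
    have expand : q.leadingCoeff * (-1)^(k-0) * q.roots.esymm (k-0)
        * (q.leadingCoeff * (-1)^(k-2) * q.roots.esymm (k-2))
        = q.leadingCoeff^2 * ((-1)^(k-0) * (-1)^(k-2)) * (q.roots.esymm (k-0) * q.roots.esymm (k-2)) := by
      ring
    rw [expand, hsign, mul_one, Nat.sub_zero]
    exact mul_nonpos_of_nonneg_of_nonpos (sq_nonneg _) hmf
  have c2pos : (0:ℝ) < q.coeff 2 := by
    rw [hcoeff 2 hk2]
    exact mul_pos (hdesc _ _ (by omega)) h2
  have c0np : q.coeff 0 ≤ 0 := by nlinarith [hprod, c2pos]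
  rw [hcoeff 0 (by omega), Nat.sub_zero] at c0np
  nlinarith [c0np, hdesc (0 + (m-k)) (m-k) (by omega)]

lemma esymF_eq_esymm {n : ℕ} (l : Fin n → ℝ) (t : Finset (Fin n)) (j : ℕ) :
    (t.val.map l).esymm j = esymF l t j := Finset.esymm_map_val l t j

lemma esymF_shift_pos {n : ℕ} (l : Fin n → ℝ) {c : ℝ} (hc : 0 ≤ c) {t : Finset (Fin n)}
    {j k : ℕ} (hj : 1 ≤ j) (hjk : j ≤ k) (hjc : j ≤ t.card)
    (hG : ∀ m, 1 ≤ m → m ≤ k → 0 < esymF l t m) :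
    0 < esymF (fun x => l x + c) t j := by
  rw [esymF_shift l c hjc]
  have hnonneg : ∀ i ∈ Finset.range (j+1),
      0 ≤ ((i + (t.card - j)).choose (t.card - j) : ℝ) * esymF l t (j - i) * c^i := by
    intro i hi
    have h1 : 0 ≤ esymF l t (j - i) := by
      rcases Nat.eq_zero_or_pos (j - i) with h | h
      · rw [h, esymF_zero]; norm_num
      · exact le_of_lt (hG _ h (by omega))
    positivity
  refine Finset.sum_pos' hnonneg ⟨0, Finset.mem_range.mpr (by omega), ?_⟩
  simp only [Nat.zero_add, Nat.choose_self, Nat.cast_one, one_mul, pow_zero, mul_one, Nat.sub_zero]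
  exact hG j hj hjk

lemma keyG {n : ℕ} (k : ℕ) : ∀ (l : Fin n → ℝ) (t : Finset (Fin n)),
    (∀ j, 1 ≤ j → j ≤ k → 0 < esymF l t j) → k ≤ t.card → ∀ i ∈ t,
    0 < esymF l (t.erase i) (k-1) := by
  induction k using Nat.strong_induction_on with
  | _ k IH =>
  intro l t hG hcard i hit
  obtain _ | _ | K := k
  · rw [show (0:ℕ)-1 = 0 from rfl, esymF_zero]; exact one_pos
  · rw [show (1:ℕ)-1 = 0 from rfl, esymF_zero]; exact one_pos
  -- k = K + 2
  have hk2 : (2:ℕ) ≤ K + 2 := by omega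
  obtain ⟨i₀, hi₀t, hmax⟩ := Finset.exists_max_image t l ⟨i, hit⟩
  -- lower levels on erased sets, for arbitrary shifted weights
  have hlow : ∀ (l' : Fin n → ℝ), (∀ j, 1 ≤ j → j ≤ K+1 → 0 < esymF l' t j) →
      ∀ m, m ≤ K → ∀ x ∈ t, 0 < esymF l' (t.erase x) m := by
    intro l' hG' m hm x hx
    have := IH (m+1) (by omega) l' t (fun j h1 h2 => hG' j h1 (by omega)) (by omega) x hx
    simpa using this
  -- Step A : positivity after erasing the max index
  have stepA : 0 < esymF l (t.erase i₀) (K+1) := by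
    by_contra hA'
    push_neg at hA'
    set t' := t.erase i₀ with ht'
    set A := esymF l t' (K+1) with hAdef
    have hcard' : t'.card = t.card - 1 := card_erase_of_mem hi₀t
    have hK1c : K + 1 ≤ t'.card := by omega
    set g : ℝ → ℝ := fun c => esymF (fun x => l x + c) t' (K+1) with hg
    have hgcont : Continuous g := by
      simp only [hg, esymF]
      exact continuous_finset_sum _ fun s _ =>
        continuous_finset_prod _ fun x _ => (continuous_const.add continuous_id)
    have hg0 : g 0 = A := by
      have : (fun x => l x + (0:ℝ)) = l := by funext x; simp
      simp only [hg, this, hAdef]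
    -- growth
    set M : ℝ := -A + 1 with hM
    have hM1 : (1:ℝ) ≤ M := by simp [hM]; linarith
    have hM0 : (0:ℝ) ≤ M := by linarith
    have hgM : 0 < g M := by
      rw [hg]
      simp only
      rw [esymF_shift l M hK1c]
      set m' := t'.card - (K+1) with hm'
      set term : ℕ → ℝ := fun i => ((i + m').choose m' : ℝ) * esymF l t' (K+1-i) * M^i with hterm
      have hnn : ∀ i ∈ (Finset.range (K+2)).erase 0, 0 ≤ term i := by
        intro i hi'
        obtain ⟨hi0, hir⟩ := Finset.mem_erase.mp hi'
        rw [Finset.mem_range] at hir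
        have h1 : 0 ≤ esymF l t' (K+1-i) := by
          rcases Nat.eq_zero_or_pos (K+1-i) with h | h
          · rw [h, esymF_zero]; norm_num
          · exact le_of_lt (hlow l (fun j hj1 hj2 => hG j hj1 (by omega)) (K+1-i) (by omega) i₀ hi₀t)
        positivity
      have hsplit : term 0 + ∑ i ∈ (Finset.range (K+2)).erase 0, term i
          = ∑ i ∈ Finset.range (K+2), term i :=
        Finset.add_sum_erase _ term (Finset.mem_range.mpr (by omega))
      have hterm0 : term 0 = A := by
        simp [hterm, hAdef]
      have htop : ((t'.card).choose m' : ℝ) * M^(K+1) ≤ ∑ i ∈ (Finset.range (K+2)).erase 0, term i := by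
        have hmem : K + 1 ∈ (Finset.range (K+2)).erase 0 := by
          rw [Finset.mem_erase, Finset.mem_range]; omega
        have := Finset.single_le_sum hnn hmem
        have hterm_top : term (K+1) = ((t'.card).choose m' : ℝ) * M^(K+1) := by
          rw [hterm]
          simp only
          rw [show K + 1 + m' = t'.card by omega, Nat.sub_self, esymF_zero]
          ring
        linarith [this, hterm_top.symm.le]
      have hchoose1 : (1:ℝ) ≤ ((t'.card).choose m' : ℝ) := by
        have : 0 < (t'.card).choose m' := Nat.choose_pos (by omega)
        exact_mod_cast this
      have hMpow : M ≤ M^(K+1) := le_self_pow₀ hM1 (by omega)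
      have hCc : M^(K+1) ≤ ((t'.card).choose m' : ℝ) * M^(K+1) := by
        nlinarith [pow_nonneg hM0 (K+1)]
      have : 0 < term 0 + ∑ i ∈ (Finset.range (K+2)).erase 0, term i := by
        rw [hterm0]
        have : M + A = 1 := by rw [hM]; ring
        nlinarith
      rw [hsplit] at this
      exact this
    -- IVT
    have h0mem : (0:ℝ) ∈ Set.Icc (g 0) (g M) := by
      rw [hg0]; exact ⟨hA', le_of_lt hgM⟩
    obtain ⟨c₀, hc₀mem, hc₀⟩ := intermediate_value_Icc hM0 hgcont.continuousOn h0mem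
    have hc₀0 : 0 ≤ c₀ := hc₀mem.1
    set ν : Fin n → ℝ := fun x => l x + c₀ with hν
    have hGν : ∀ j, 1 ≤ j → j ≤ K+2 → 0 < esymF ν t j := fun j h1 h2 =>
      esymF_shift_pos l hc₀0 h1 h2 (by omega) hG
    have hν2 : 0 < esymF ν (t.erase i₀) K := by
      have := IH (K+1) (by omega) ν t (fun j h1 h2 => hGν j h1 (by omega)) (by omega) i₀ hi₀t
      simpa using this
    have hν1 : esymF ν t' (K+1) = 0 := hc₀
    have hνk : esymF ν t' (K+2) ≤ 0 := by
      rcases Nat.lt_or_ge t'.card (K+2) with h | h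
      · rw [esymF_of_card_lt ν h]
      · have hms : Multiset.card (t'.val.map ν) = t'.card := by
          rw [Multiset.card_map]; rfl
        have := newton_special (t'.val.map ν) (K+2) hk2 (by omega)
          (by rw [show K+2-1 = K+1 from rfl, esymF_eq_esymm]; exact hν1)
          (by rw [show K+2-2 = K from rfl, esymF_eq_esymm]; exact hν2)
        rwa [esymF_eq_esymm] at this
    have hcontra : 0 < esymF ν t (K+2) := hGν (K+2) (by omega) le_rfl
    rw [esymF_erase ν hi₀t (K+1)] at hcontra
    rw [hν1, mul_zero, zero_add] at hcontra
    exact absurd hνk (not_le.mpr hcontra)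
  -- Step C : general i
  rcases eq_or_ne i i₀ with rfl | hne
  · simpa using stepA
  · have hit' : i ∈ t.erase i₀ := Finset.mem_erase.mpr ⟨hne, hit⟩
    have hG' : ∀ j, 1 ≤ j → j ≤ K+1 → 0 < esymF l (t.erase i₀) j := by
      intro j h1 h2
      rcases Nat.lt_or_ge j (K+1) with h | h
      · exact hlow l (fun j' hj1 hj2 => hG j' hj1 (by omega)) j (by omega) i₀ hi₀t
      · have : j = K+1 := by omega
        rw [this]; exact stepA
    have hsub := IH (K+1) (by omega) l (t.erase i₀) hG'
      (by rw [card_erase_of_mem hi₀t]; omega) i hit'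
    simp only [show K+1-1 = K from rfl] at hsub
    -- the exchange identity
    have hid1 : esymF l (t.erase i) (K+1)
        = l i₀ * esymF l ((t.erase i).erase i₀) K + esymF l ((t.erase i).erase i₀) (K+1) :=
      esymF_erase l (Finset.mem_erase.mpr ⟨(Ne.symm hne), hi₀t⟩) K
    have hid2 : esymF l (t.erase i₀) (K+1)
        = l i * esymF l ((t.erase i₀).erase i) K + esymF l ((t.erase i₀).erase i) (K+1) :=
      esymF_erase l hit' K
    have hcomm : (t.erase i).erase i₀ = (t.erase i₀).erase i := Finset.erase_right_comm
    rw [hcomm] at hid1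
    have hle : l i ≤ l i₀ := hmax i hit
    show 0 < esymF l (t.erase i) (K+2-1)
    rw [show K+2-1 = K+1 from rfl, hid1]
    have : esymF l (t.erase i₀) (K+1) ≤ l i₀ * esymF l ((t.erase i₀).erase i) K
        + esymF l ((t.erase i₀).erase i) (K+1) := by
      rw [hid2] at stepA ⊢
      nlinarith [hsub, hle]
    calc (0:ℝ) < esymF l (t.erase i₀) (K+1) := stepA
      _ ≤ _ := this

lemma esymF_sum_erase {n : ℕ} (l : Fin n → ℝ) {k : ℕ} (hk : k ≤ n) :
    ∑ i : Fin n, esymF l (univ.erase i) k = ((n - k : ℕ) : ℝ) * esymF l univ k := by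
  classical
  have hrw : ∀ i : Fin n, esymF l (univ.erase i) k
      = ∑ s ∈ univ.powersetCard k, (if i ∈ s then 0 else ∏ x ∈ s, l x) := by
    intro i
    rw [esymF]
    calc ∑ s ∈ (univ.erase i).powersetCard k, ∏ x ∈ s, l x
        = ∑ s ∈ (univ.erase i).powersetCard k, (if i ∈ s then 0 else ∏ x ∈ s, l x) := by
          refine Finset.sum_congr rfl fun s hs => ?_
          have hnotin : i ∉ s := fun hmem =>
            (Finset.mem_erase.mp ((Finset.mem_powersetCard.mp hs).1 hmem)).1 rfl
          rw [if_neg hnotin]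
      _ = ∑ s ∈ univ.powersetCard k, (if i ∈ s then 0 else ∏ x ∈ s, l x) := by
          refine Finset.sum_subset (Finset.powersetCard_mono (Finset.erase_subset i univ)) ?_
          intro s hs hns
          have : i ∈ s := by
            by_contra hin
            refine hns (Finset.mem_powersetCard.mpr ⟨?_, (Finset.mem_powersetCard.mp hs).2⟩)
            exact fun x hx => Finset.mem_erase.mpr ⟨fun he => hin (he ▸ hx), Finset.mem_univ x⟩
          rw [if_pos this]
  calc ∑ i : Fin n, esymF l (univ.erase i) k
      = ∑ i : Fin n, ∑ s ∈ univ.powersetCard k, (if i ∈ s then 0 else ∏ x ∈ s, l x) := by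
        exact Finset.sum_congr rfl fun i _ => hrw i
    _ = ∑ s ∈ univ.powersetCard k, ∑ i : Fin n, (if i ∈ s then 0 else ∏ x ∈ s, l x) :=
        Finset.sum_comm
    _ = ((n - k : ℕ) : ℝ) * esymF l univ k := by
        rw [esymF, Finset.mul_sum]
        refine Finset.sum_congr rfl fun s hs => ?_
        rw [Finset.sum_ite, Finset.sum_const_zero, Finset.sum_const, zero_add, nsmul_eq_mul]
        have hfil : (univ.filter (fun i => ¬ i ∈ s)).card = n - k := by
          have h1 : univ.filter (fun i => ¬ i ∈ s) = sᶜ := by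
            ext x; simp [Finset.mem_compl]
          rw [h1, Finset.card_compl, Finset.mem_powersetCard_univ.mp hs]
          simp
        rw [hfil]

theorem lambda1_esymDel_lower (n k : ℕ) (hk1 : 1 ≤ k) (hkn : k ≤ n) (hn : 0 < n)
    (l : Fin n → ℝ) (hord : ∀ i j : Fin n, i ≤ j → l j ≤ l i) (h : GammaCone n k l) :
    l ⟨0, hn⟩ * esymDel n (k - 1) l ⟨0, hn⟩ ≥ ((k : ℝ) / n) * esym n k l := by
  classical
  set z : Fin n := ⟨0, hn⟩ with hz
  have hGam : ∀ j, 1 ≤ j → j ≤ k → 0 < esymF l univ j := fun j h1 h2 => h j h1 h2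
  have hmaxz : ∀ i : Fin n, l i ≤ l z := fun i => hord z i (by simp [hz, Fin.le_def])
  obtain ⟨K, rfl⟩ : ∃ K, k = K + 1 := ⟨k - 1, by omega⟩
  have hcardu : (univ : Finset (Fin n)).card = n := by simp
  have hid0 : esymF l univ (K+1)
      = l z * esymF l (univ.erase z) K + esymF l (univ.erase z) (K+1) :=
    esymF_erase l (mem_univ z) K
  have hKpos : 0 < esymF l univ (K+1) := hGam (K+1) (by omega) le_rfl
  -- main estimate
  have hsum : (n:ℝ) * esymF l (univ.erase z) (K+1)
      ≤ ((n - (K+1) : ℕ) : ℝ) * esymF l univ (K+1) := by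
    rcases le_or_gt (esymF l (univ.erase z) (K+1)) 0 with hcase | hcase
    · have h1 : (n:ℝ) * esymF l (univ.erase z) (K+1) ≤ 0 :=
        mul_nonpos_of_nonneg_of_nonpos (by positivity) hcase
      have h2 : (0:ℝ) ≤ ((n - (K+1) : ℕ) : ℝ) * esymF l univ (K+1) := by positivity
      linarith
    · -- the erased tuple is in the Gamma cone at level K+1
      have hkn' : K + 1 ≤ n - 1 := by
        by_contra hcon
        have hcn : (univ.erase z).card < K + 1 := by
          rw [Finset.card_erase_of_mem (mem_univ z), hcardu]; omega
        rw [esymF_of_card_lt l hcn] at hcase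
        exact lt_irrefl 0 hcase
      have hG' : ∀ j, 1 ≤ j → j ≤ K+1 → 0 < esymF l (univ.erase z) j := by
        intro j h1 h2
        rcases Nat.lt_or_ge j (K+1) with hj | hj
        · have := keyG (j+1) l univ (fun j' hj1 hj2 => hGam j' hj1 (by omega))
            (by omega) z (mem_univ z)
          simpa using this
        · have : j = K+1 := by omega
          rw [this]; exact hcase
      have hpoint : ∀ i : Fin n,
          esymF l (univ.erase z) (K+1) ≤ esymF l (univ.erase i) (K+1) := by
        intro i
        rcases eq_or_ne i z with rfl | hne
        · exact le_rfl
        · have hiz : i ∈ univ.erase z := Finset.mem_erase.mpr ⟨hne, mem_univ i⟩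
          have hpos := keyG (K+1) l (univ.erase z) hG'
            (by rw [Finset.card_erase_of_mem (mem_univ z), hcardu]; omega) i hiz
          simp only [show K+1-1 = K from rfl] at hpos
          have hid1 : esymF l (univ.erase i) (K+1)
              = l z * esymF l ((univ.erase i).erase z) K
                + esymF l ((univ.erase i).erase z) (K+1) :=
            esymF_erase l (Finset.mem_erase.mpr ⟨Ne.symm hne, mem_univ z⟩) K
          have hid2 : esymF l (univ.erase z) (K+1)
              = l i * esymF l ((univ.erase z).erase i) K
                + esymF l ((univ.erase z).erase i) (K+1) :=
            esymF_erase l hiz K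
          have hcomm : (univ.erase i).erase z = (univ.erase z).erase i :=
            Finset.erase_right_comm
          rw [hid1, hcomm, hid2]
          nlinarith [hmaxz i, hpos]
      calc (n:ℝ) * esymF l (univ.erase z) (K+1)
          = ∑ _i : Fin n, esymF l (univ.erase z) (K+1) := by
            rw [Finset.sum_const, Finset.card_univ, Fintype.card_fin, nsmul_eq_mul]
        _ ≤ ∑ i : Fin n, esymF l (univ.erase i) (K+1) :=
            Finset.sum_le_sum fun i _ => hpoint i
        _ = ((n - (K+1) : ℕ) : ℝ) * esymF l univ (K+1) := esymF_sum_erase l hkn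
  -- conclude
  have hcast : ((n - (K+1) : ℕ) : ℝ) = (n:ℝ) - (K+1:ℕ) := by
    rw [Nat.cast_sub hkn]
  have hn' : (0:ℝ) < n := by exact_mod_cast hn
  have hgoal : l z * esymF l (univ.erase z) K ≥ (((K+1:ℕ):ℝ) / n) * esymF l univ (K+1) := by
    rw [ge_iff_le, div_mul_eq_mul_div, div_le_iff₀ hn']
    have hlz : l z * esymF l (univ.erase z) K
        = esymF l univ (K+1) - esymF l (univ.erase z) (K+1) := by linarith [hid0]
    rw [hlz]
    rw [hcast] at hsum
    push_cast at hsum ⊢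
    nlinarith [hKpos, hsum]
  have h1 : esymDel n (K+1-1) l z = esymF l (univ.erase z) K := rfl
  have h2 : esym n (K+1) l = esymF l univ (K+1) := rfl
  rw [h1, h2]
  exact_mod_cast hgoal
end

section
/- Generalized Newton–MacLaurin inequality: for λ ∈ Γ_m and integers m > l ≥ 0, r > s ≥ 0 with m ≥ r and l ≥ s, one has [ (σ_m(λ)/C(n,m)) / (σ_l(λ)/C(n,l)) ]^{1/(m-l)} ≤ [ (σ_r(λ)/C(n,r)) / (σ_s(λ)/C(n,s)) ]^{1/(r-s)}. -/
open Finset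

section NewtonAux
open Polynomial

def RR (p : ℝ[X]) : Prop := Multiset.card p.roots = p.natDegree

lemma reflect_one_X_sub_C (a : ℝ) : reflect 1 (X - C a) = 1 - C a * X := by
  have : (X - C a : ℝ[X]) = X ^ 1 + C (-a) * X ^ 0 := by simp [sub_eq_add_neg]
  rw [this, reflect_add, reflect_monomial, reflect_C_mul_X_pow]
  simp [revAt_le]; ring

lemma reflect_prod_X_sub_C (ρ : Multiset ℝ) :
    reflect (Multiset.card ρ) ((ρ.map fun a => X - C a).prod)
      = (ρ.map fun a => 1 - C a * X).prod := by
  induction ρ using Multiset.induction with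
  | empty =>
    simp only [Multiset.map_zero, Multiset.prod_zero, Multiset.card_zero]
    have : (1 : ℝ[X]) = C 1 * X ^ 0 := by simp
    rw [this, reflect_C_mul_X_pow]; simp
  | cons a s ih =>
    rw [Multiset.map_cons, Multiset.map_cons, Multiset.prod_cons, Multiset.prod_cons,
      Multiset.card_cons]
    have h1 : (X - C a : ℝ[X]).natDegree ≤ 1 := (natDegree_X_sub_C a).le
    have h2 : ((s.map fun a => X - C a).prod).natDegree ≤ Multiset.card s := by
      rw [natDegree_multiset_prod_X_sub_C_eq_card]
    rw [show Multiset.card s + 1 = 1 + Multiset.card s by ring, reflect_mul _ _ h1 h2,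
      reflect_one_X_sub_C, ih]

lemma RR_reflect (p : ℝ[X]) (h : RR p) (h0 : p.coeff 0 ≠ 0) :
    RR (reflect p.natDegree p) ∧ (reflect p.natDegree p).natDegree = p.natDegree := by
  have hp : p ≠ 0 := fun h' => by simp [h'] at h0
  have hroots0 : ∀ r ∈ p.roots, r ≠ 0 := by
    intro r hr rfl0
    subst rfl0
    have := (mem_roots hp).mp hr
    rw [IsRoot, ← coeff_zero_eq_eval_zero] at this
    exact h0 this
  have hfac := C_leadingCoeff_mul_prod_multiset_X_sub_C (p := p) h
  have hlc : p.leadingCoeff ≠ 0 := leadingCoeff_ne_zero.mpr hp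
  -- compute reflect
  have hdeg1 : (C p.leadingCoeff : ℝ[X]).natDegree ≤ 0 := (natDegree_C _).le
  have hdeg2 : ((p.roots.map fun a => X - C a).prod).natDegree ≤ p.natDegree := by
    rw [natDegree_multiset_prod_X_sub_C_eq_card, h]
  have key : reflect p.natDegree p
      = C (p.leadingCoeff * ((p.roots.map fun a => -a).prod))
        * (((p.roots.map fun a => a⁻¹)).map fun a => X - C a).prod := by
    have step : reflect p.natDegree p
        = reflect p.natDegree (C p.leadingCoeff * (p.roots.map fun a => X - C a).prod) := by
      rw [hfac]
    rw [step]
    rw [show p.natDegree = 0 + p.natDegree by ring, reflect_mul _ _ hdeg1 hdeg2,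
      reflect_C]
    rw [show p.natDegree = Multiset.card p.roots from h.symm, reflect_prod_X_sub_C]
    have hcong : (p.roots.map fun a => (1 : ℝ[X]) - C a * X)
        = p.roots.map fun a => C (-a) * (X - C a⁻¹) := by
      apply Multiset.map_congr rfl
      intro a ha
      have : a ≠ 0 := hroots0 a ha
      rw [mul_sub, ← C_mul, neg_mul, mul_inv_cancel₀ this]
      simp only [map_neg, map_one]
      ring
    rw [hcong, Multiset.prod_map_mul]
    rw [show (p.roots.map fun a => (C (-a) : ℝ[X])) = (p.roots.map fun a => -a).map C by
      rw [Multiset.map_map]; rfl]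
    rw [← map_multiset_prod (C : ℝ →+* ℝ[X])]
    rw [show (p.roots.map fun a => (X - C a⁻¹ : ℝ[X]))
        = (p.roots.map fun a => a⁻¹).map fun a => X - C a by rw [Multiset.map_map]; rfl]
    rw [C_mul]
    ring
  have hd : p.leadingCoeff * ((p.roots.map fun a => -a).prod) ≠ 0 := by
    apply mul_ne_zero hlc
    apply Multiset.prod_ne_zero
    intro h0'
    obtain ⟨r, hr, hr0⟩ := Multiset.mem_map.mp h0'
    exact hroots0 r hr (by linarith [hr0] )
  have hnd : (reflect p.natDegree p).natDegree = p.natDegree := by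
    rw [key, natDegree_C_mul hd, natDegree_multiset_prod_X_sub_C_eq_card,
      Multiset.card_map, h]
  refine ⟨?_, hnd⟩
  unfold RR
  rw [key, roots_C_mul _ hd, roots_multiset_prod_X_sub_C, ← key, hnd, Multiset.card_map, h]

lemma RR_derivative (p : ℝ[X]) (h : RR p) : RR (derivative p) := by
  have h1 := Polynomial.card_roots_le_derivative p
  have h2 := Polynomial.card_roots' (derivative p)
  have h3 := Polynomial.natDegree_derivative_le p
  unfold RR at *
  omega

lemma RR_iterate (p : ℝ[X]) (h : RR p) (k : ℕ) : RR (derivative^[k] p) := by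
  induction k with
  | zero => simpa
  | succ k ih => rw [Function.iterate_succ_apply']; exact RR_derivative _ ih

lemma natDegree_iterate_RR (p : ℝ[X]) (h : RR p) (k : ℕ) (hk : k ≤ p.natDegree) :
    (derivative^[k] p).natDegree = p.natDegree - k := by
  induction k with
  | zero => simp
  | succ k ih =>
    rw [Function.iterate_succ_apply']
    have hrr := RR_iterate p h k
    have hd : (derivative^[k] p).natDegree = p.natDegree - k := ih (by omega)
    -- from RR_derivative proof we know exact degree; redo:
    have h1 := Polynomial.card_roots_le_derivative (derivative^[k] p)
    have h2 := Polynomial.card_roots' (derivative (derivative^[k] p))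
    have h3 := Polynomial.natDegree_derivative_le (derivative^[k] p)
    unfold RR at hrr
    omega

noncomputable def P (n : ℕ) (l : Fin n → ℝ) : ℝ[X] := ∏ i : Fin n, (X + C (l i))

lemma P_monic (n : ℕ) (l : Fin n → ℝ) : (P n l).Monic :=
  monic_prod_of_monic _ _ (fun i _ => monic_X_add_C (l i))

lemma P_natDegree (n : ℕ) (l : Fin n → ℝ) : (P n l).natDegree = n := by
  rw [P, natDegree_prod]
  · simp
  · intro i _; exact (monic_X_add_C (l i)).ne_zero

lemma P_coeff (n : ℕ) (l : Fin n → ℝ) (k : ℕ) (hk : k ≤ n) :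
    (P n l).coeff k = esym n (n - k) l := by
  rw [P, Finset.prod_X_add_C_coeff _ _ (by simpa using hk)]
  simp [esym]

lemma P_roots (n : ℕ) (l : Fin n → ℝ) :
    (P n l).roots = (Finset.univ.val.map fun i => -(l i)) := by
  have : P n l = ((Finset.univ.val.map fun i : Fin n => -(l i)).map fun a => X - C a).prod := by
    rw [P, Finset.prod]
    rw [Multiset.map_map]
    congr 1
    apply Multiset.map_congr rfl
    intro i _
    simp [sub_neg_eq_add]
  rw [this, roots_multiset_prod_X_sub_C]

lemma quadratic_discrim {a b c x : ℝ} (h : a*x^2 + b*x + c = 0) : 4*a*c ≤ b^2 := by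
  have key : b^2 - 4*a*c = (2*a*x+b)^2 := by linear_combination (-4*a) * h
  nlinarith [sq_nonneg (2*a*x+b)]

lemma newton_factorial (n k : ℕ) (l : Fin n → ℝ) (hk : 1 ≤ k) (hkn : k + 1 ≤ n)
    (hne : esym n (k+1) l ≠ 0) :
    esym n (k-1) l * esym n (k+1) l *
      ((Nat.factorial (k-1) * Nat.factorial (k+1) * Nat.factorial (n-k+1)
        * Nat.factorial (n-k-1) : ℕ) : ℝ)
    ≤ esym n k l ^ 2 * (((Nat.factorial k * Nat.factorial (n-k) : ℕ) : ℝ))^2 := by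
  have hPrr : RR (P n l) := by
    unfold RR
    rw [P_roots, P_natDegree, Multiset.card_map]
    simp
  set Q := derivative^[n-k-1] (P n l) with hQ
  have hQrr : RR Q := RR_iterate _ hPrr _
  have hQdeg : Q.natDegree = k + 1 := by
    rw [hQ, natDegree_iterate_RR _ hPrr _ (by rw [P_natDegree]; omega), P_natDegree]
    omega
  have hQco : ∀ t, t ≤ k+1 → Q.coeff t
      = (((t + (n-k-1)).descFactorial (n-k-1) : ℕ) : ℝ) * esym n (k+1-t) l := by
    intro t ht
    rw [hQ, Polynomial.coeff_iterate_derivative, P_coeff _ _ _ (by omega), nsmul_eq_mul]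
    congr 2
    omega
  have hQ0 : Q.coeff 0 ≠ 0 := by
    rw [hQco 0 (by omega)]
    rw [zero_add, Nat.descFactorial_self]
    exact mul_ne_zero (Nat.cast_ne_zero.mpr (Nat.factorial_ne_zero _)) hne
  -- reflected polynomial
  set W := reflect (k+1) Q with hW
  have hW' : W = reflect Q.natDegree Q := by rw [hW, hQdeg]
  obtain ⟨hWrr, hWdeg⟩ : RR W ∧ W.natDegree = k + 1 := by
    rw [hW']
    have := RR_reflect Q hQrr hQ0
    exact ⟨this.1, by rw [this.2, hQdeg]⟩
  have hWco : ∀ j, j ≤ k+1 → W.coeff j = Q.coeff (k+1-j) := by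
    intro j hj
    rw [hW, coeff_reflect, revAt_le hj]
  -- the quadratic
  set S := derivative^[k-1] W with hS
  have hSrr : RR S := RR_iterate _ hWrr _
  have hSdeg : S.natDegree = 2 := by
    rw [hS, natDegree_iterate_RR _ hWrr _ (by omega), hWdeg]
    omega
  have hSco : ∀ t, S.coeff t
      = (((t + (k-1)).descFactorial (k-1) : ℕ) : ℝ) * W.coeff (t + (k-1)) := by
    intro t
    rw [hS, Polynomial.coeff_iterate_derivative, nsmul_eq_mul]
  -- find a root
  have hScard : Multiset.card S.roots = 2 := by rw [hSrr, hSdeg]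
  obtain ⟨x, hx⟩ : ∃ x, x ∈ S.roots := by
    apply Multiset.exists_mem_of_ne_zero
    intro h0
    rw [h0] at hScard
    simp at hScard
  have hSne : S ≠ 0 := by
    intro h0
    rw [h0] at hSdeg
    simp at hSdeg
  have hxr : S.eval x = 0 := (isRoot_of_mem_roots hx)
  have heval : S.coeff 0 + S.coeff 1 * x + S.coeff 2 * x^2 = 0 := by
    rw [← hxr, eval_eq_sum_range, hSdeg]
    rw [Finset.sum_range_succ, Finset.sum_range_succ, Finset.sum_range_succ]
    simp
    try ring
  -- coefficient values
  have hc0 : S.coeff 0 = (((n-k+1).descFactorial (n-k-1) : ℕ) : ℝ)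
      * (((k-1).factorial : ℕ) : ℝ) * esym n (k-1) l := by
    rw [hSco 0, hWco (0 + (k-1)) (by omega), hQco (k+1-(0+(k-1))) (by omega)]
    rw [show k + 1 - (0 + (k-1)) = 2 by omega, show (0 : ℕ) + (k-1) = k-1 by omega,
      show 2 + (n-k-1) = n-k+1 by omega, show k+1-2 = k-1 by omega,
      Nat.descFactorial_self]
    ring
  have hc1 : S.coeff 1 = ((k.descFactorial (k-1) : ℕ) : ℝ)
      * (((n-k).descFactorial (n-k-1) : ℕ) : ℝ) * esym n k l := by
    rw [hSco 1, hWco (1 + (k-1)) (by omega), hQco (k+1-(1+(k-1))) (by omega)]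
    rw [show (1 : ℕ) + (k-1) = k by omega, show k + 1 - k = 1 by omega,
      show 1 + (n-k-1) = n-k by omega, show k+1-1 = k by omega]
    ring
  have hc2 : S.coeff 2 = (((k+1).descFactorial (k-1) : ℕ) : ℝ)
      * (((n-k-1).factorial : ℕ) : ℝ) * esym n (k+1) l := by
    rw [hSco 2, hWco (2 + (k-1)) (by omega), hQco (k+1-(2+(k-1))) (by omega)]
    rw [show (2 : ℕ) + (k-1) = k+1 by omega, show k + 1 - (k+1) = 0 by omega,
      show (0:ℕ) + (n-k-1) = n-k-1 by omega, show k+1-0 = k+1 by omega,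
      Nat.descFactorial_self]
    ring
  have h4 : 4 * S.coeff 2 * S.coeff 0 ≤ (S.coeff 1)^2 := by
    apply quadratic_discrim (x := x)
    rw [← heval]; ring
  rw [hc0, hc1, hc2] at h4
  -- descFactorial/factorial conversions
  have i1 : 2 * (k+1).descFactorial (k-1) = (k+1).factorial := by
    have := Nat.factorial_mul_descFactorial (show k - 1 ≤ k+1 by omega)
    rw [show k + 1 - (k-1) = 2 by omega] at this
    simpa [Nat.factorial] using this
  have i2 : 2 * (n-k+1).descFactorial (n-k-1) = (n-k+1).factorial := by
    have := Nat.factorial_mul_descFactorial (show n-k-1 ≤ n-k+1 by omega)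
    rw [show n-k+1 - (n-k-1) = 2 by omega] at this
    simpa [Nat.factorial] using this
  have i3 : k.descFactorial (k-1) = k.factorial := by
    have := Nat.factorial_mul_descFactorial (show k - 1 ≤ k by omega)
    rw [show k - (k-1) = 1 by omega] at this
    simpa [Nat.factorial] using this
  have i4 : (n-k).descFactorial (n-k-1) = (n-k).factorial := by
    have := Nat.factorial_mul_descFactorial (show n-k-1 ≤ n-k by omega)
    rw [show n-k - (n-k-1) = 1 by omega] at this
    simpa [Nat.factorial] using this
  have e1 : 2 * (((k+1).descFactorial (k-1) : ℕ) : ℝ) = (((k+1).factorial : ℕ) : ℝ) := by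
    exact_mod_cast congrArg (Nat.cast (R := ℝ)) i1
  have e2 : 2 * (((n-k+1).descFactorial (n-k-1) : ℕ) : ℝ) = (((n-k+1).factorial : ℕ) : ℝ) := by
    exact_mod_cast congrArg (Nat.cast (R := ℝ)) i2
  have e3 : ((k.descFactorial (k-1) : ℕ) : ℝ) = ((k.factorial : ℕ) : ℝ) := by
    exact_mod_cast congrArg (Nat.cast (R := ℝ)) i3
  have e4 : (((n-k).descFactorial (n-k-1) : ℕ) : ℝ) = (((n-k).factorial : ℕ) : ℝ) := by
    exact_mod_cast congrArg (Nat.cast (R := ℝ)) i4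
  push_cast
  push_cast at h4
  rw [← e1, ← e2, ← e3, ← e4]
  nlinarith [h4]

lemma newton_choose (n k : ℕ) (l : Fin n → ℝ) (hk : 1 ≤ k) (hkn : k + 1 ≤ n)
    (hne : esym n (k+1) l ≠ 0) :
    esym n (k-1) l * esym n (k+1) l * ((n.choose k : ℝ))^2
    ≤ esym n k l ^ 2 * ((n.choose (k-1) : ℝ) * (n.choose (k+1) : ℝ)) := by
  have hnf := newton_factorial n k l hk hkn hne
  have c1 : (n.choose (k-1) : ℝ) = (n.factorial : ℝ)
      / ((k-1).factorial * (n-k+1).factorial) := by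
    have h := Nat.choose_mul_factorial_mul_factorial (show k - 1 ≤ n by omega)
    rw [show n - (k-1) = n-k+1 by omega] at h
    have h' : ((n.choose (k-1) * (k-1).factorial * (n-k+1).factorial : ℕ) : ℝ)
        = (n.factorial : ℝ) := by exact_mod_cast congrArg (Nat.cast (R := ℝ)) h
    push_cast at h'
    field_simp
    linarith [h']
  have c2 : (n.choose k : ℝ) = (n.factorial : ℝ)
      / (k.factorial * (n-k).factorial) := by
    have h := Nat.choose_mul_factorial_mul_factorial (show k ≤ n by omega)
    have h' : ((n.choose k * k.factorial * (n-k).factorial : ℕ) : ℝ)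
        = (n.factorial : ℝ) := by exact_mod_cast congrArg (Nat.cast (R := ℝ)) h
    push_cast at h'
    field_simp
    linarith [h']
  have c3 : (n.choose (k+1) : ℝ) = (n.factorial : ℝ)
      / ((k+1).factorial * (n-k-1).factorial) := by
    have h := Nat.choose_mul_factorial_mul_factorial (show k + 1 ≤ n by omega)
    rw [show n - (k+1) = n-k-1 by omega] at h
    have h' : ((n.choose (k+1) * (k+1).factorial * (n-k-1).factorial : ℕ) : ℝ)
        = (n.factorial : ℝ) := by exact_mod_cast congrArg (Nat.cast (R := ℝ)) h
    push_cast at h'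
    field_simp
    linarith [h']
  rw [c1, c2, c3]
  rw [div_pow, div_mul_div_comm]
  rw [← mul_div_assoc, ← mul_div_assoc, div_le_div_iff₀ (by positivity) (by positivity)]
  push_cast at hnf ⊢
  nlinarith [hnf, sq_nonneg ((n.factorial : ℝ)), (by positivity : (0:ℝ) < (n.factorial : ℝ))]

lemma esym_zero (n : ℕ) (l : Fin n → ℝ) : esym n 0 l = 1 := by
  simp [esym]

lemma esym_of_gt (n j : ℕ) (l : Fin n → ℝ) (hj : n < j) : esym n j l = 0 := by
  unfold esym
  rw [Finset.powersetCard_eq_empty.mpr (by simpa using hj)]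
  simp

-- average comparison lemmas
lemma avg_left (F : ℕ → ℝ) (s L m : ℕ) (hsl : s ≤ L) (hlm : L < m)
    (hmono : ∀ i j, s ≤ i → i ≤ j → j < m → F j ≤ F i) :
    (∑ j ∈ Ico L m, F j) / ((m : ℝ) - L) ≤ (∑ j ∈ Ico s m, F j) / ((m : ℝ) - s) := by
  have hml : (0:ℝ) < (m:ℝ) - L := by
    have : (L:ℝ) < m := by exact_mod_cast hlm
    linarith
  have hms : (0:ℝ) < (m:ℝ) - s := by
    have : (s:ℝ) ≤ L := by exact_mod_cast hsl
    linarith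
  rw [div_le_div_iff₀ hml hms]
  have hsplit : ∑ j ∈ Ico s m, F j = ∑ j ∈ Ico s L, F j + ∑ j ∈ Ico L m, F j :=
    (Finset.sum_Ico_consecutive _ hsl hlm.le).symm
  have key : (∑ j ∈ Ico L m, F j) * ((L:ℝ) - s) ≤ (∑ i ∈ Ico s L, F i) * ((m:ℝ) - L) := by
    calc (∑ j ∈ Ico L m, F j) * ((L:ℝ) - s)
        = ∑ i ∈ Ico s L, (∑ j ∈ Ico L m, F j) := by
          rw [Finset.sum_const, Nat.card_Ico, nsmul_eq_mul]
          rw [Nat.cast_sub hsl]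
          ring
      _ ≤ ∑ i ∈ Ico s L, (((m:ℝ) - L) * F i) := by
          apply Finset.sum_le_sum
          intro i hi
          rw [Finset.mem_Ico] at hi
          calc (∑ j ∈ Ico L m, F j) ≤ ∑ j ∈ Ico L m, F i := by
                apply Finset.sum_le_sum
                intro j hj
                rw [Finset.mem_Ico] at hj
                exact hmono i j hi.1 (le_of_lt (lt_of_lt_of_le hi.2 hj.1)) hj.2
            _ = ((m:ℝ) - L) * F i := by
                rw [Finset.sum_const, Nat.card_Ico, nsmul_eq_mul, Nat.cast_sub hlm.le]
      _ = (∑ i ∈ Ico s L, F i) * ((m:ℝ) - L) := by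
          rw [← Finset.mul_sum]; ring
  rw [hsplit]
  nlinarith [key]

lemma avg_right (F : ℕ → ℝ) (s r m : ℕ) (hsr : s < r) (hrm : r ≤ m)
    (hmono : ∀ i j, s ≤ i → i ≤ j → j < m → F j ≤ F i) :
    (∑ j ∈ Ico s m, F j) / ((m : ℝ) - s) ≤ (∑ j ∈ Ico s r, F j) / ((r : ℝ) - s) := by
  have hrs : (0:ℝ) < (r:ℝ) - s := by
    have : (s:ℝ) < r := by exact_mod_cast hsr
    linarith
  have hms : (0:ℝ) < (m:ℝ) - s := by
    have : (r:ℝ) ≤ m := by exact_mod_cast hrm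
    linarith
  rw [div_le_div_iff₀ hms hrs]
  have hsplit : ∑ j ∈ Ico s m, F j = ∑ j ∈ Ico s r, F j + ∑ j ∈ Ico r m, F j :=
    (Finset.sum_Ico_consecutive _ hsr.le hrm).symm
  have key : (∑ j ∈ Ico r m, F j) * ((r:ℝ) - s) ≤ (∑ i ∈ Ico s r, F i) * ((m:ℝ) - r) := by
    calc (∑ j ∈ Ico r m, F j) * ((r:ℝ) - s)
        = ∑ i ∈ Ico s r, (∑ j ∈ Ico r m, F j) := by
          rw [Finset.sum_const, Nat.card_Ico, nsmul_eq_mul, Nat.cast_sub hsr.le]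
          ring
      _ ≤ ∑ i ∈ Ico s r, (((m:ℝ) - r) * F i) := by
          apply Finset.sum_le_sum
          intro i hi
          rw [Finset.mem_Ico] at hi
          calc (∑ j ∈ Ico r m, F j) ≤ ∑ j ∈ Ico r m, F i := by
                apply Finset.sum_le_sum
                intro j hj
                rw [Finset.mem_Ico] at hj
                exact hmono i j hi.1 (le_of_lt (lt_of_lt_of_le hi.2 hj.1)) hj.2
            _ = ((m:ℝ) - r) * F i := by
                rw [Finset.sum_const, Nat.card_Ico, nsmul_eq_mul, Nat.cast_sub hrm]
      _ = (∑ i ∈ Ico s r, F i) * ((m:ℝ) - r) := by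
          rw [← Finset.mul_sum]; ring
  rw [hsplit]
  nlinarith [key]

end NewtonAux

open Polynomial in
theorem newton_maclaurin_general (n m L r s : ℕ) (l : Fin n → ℝ)
    (h : GammaCone n m l) (hmL : L < m) (hsr : s < r) (hrm : r ≤ m) (hsL : s ≤ L) :
    ((esym n m l / (Nat.choose n m : ℝ)) / (esym n L l / (Nat.choose n L : ℝ)))
        ^ ((1 : ℝ) / ((m : ℝ) - L))
      ≤ ((esym n r l / (Nat.choose n r : ℝ)) / (esym n s l / (Nat.choose n s : ℝ)))
        ^ ((1 : ℝ) / ((r : ℝ) - s)) := by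
  -- m ≤ n
  have hmn : m ≤ n := by
    by_contra hc
    push_neg at hc
    have h1 := h (n+1) (by omega) (by omega)
    rw [esym_of_gt n (n+1) l (by omega)] at h1
    exact lt_irrefl 0 h1
  set p : ℕ → ℝ := fun j => esym n j l / (n.choose j : ℝ) with hp
  have hppos : ∀ j, j ≤ m → 0 < p j := by
    intro j hj
    have hchoose : (0:ℝ) < (n.choose j : ℝ) := by
      exact_mod_cast Nat.choose_pos (le_trans hj hmn)
    rcases Nat.eq_zero_or_pos j with h0 | h1
    · subst h0
      rw [hp]
      simp [esym_zero]
    · exact div_pos (h j h1 hj) hchoose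
  -- Newton in ratio form
  have hq_step : ∀ k, 1 ≤ k → k + 1 ≤ m → p (k+1) / p k ≤ p k / p (k-1) := by
    intro k hk hkm
    have hnc := newton_choose n k l hk (by omega) (ne_of_gt (h (k+1) (by omega) hkm))
    have h1 : 0 < p k := hppos k (by omega)
    have h2 : 0 < p (k-1) := hppos (k-1) (by omega)
    rw [div_le_div_iff₀ h1 h2]
    -- p(k+1) * p(k-1) ≤ p k * p k
    have e1 : 0 < (n.choose k : ℝ) := by exact_mod_cast Nat.choose_pos (by omega : k ≤ n)
    have e2 : 0 < (n.choose (k-1) : ℝ) := by exact_mod_cast Nat.choose_pos (by omega : k-1 ≤ n)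
    have e3 : 0 < (n.choose (k+1) : ℝ) := by exact_mod_cast Nat.choose_pos (by omega : k+1 ≤ n)
    rw [hp]
    simp only
    rw [div_mul_div_comm, div_mul_div_comm, div_le_div_iff₀ (by positivity) (by positivity)]
    nlinarith [hnc]
  -- q antitone
  set F : ℕ → ℝ := fun j => Real.log (p (j+1) / p j) with hF
  have hqpos : ∀ j, j + 1 ≤ m → 0 < p (j+1) / p j :=
    fun j hj => div_pos (hppos _ hj) (hppos _ (by omega))
  have hmono : ∀ i j, i ≤ j → j + 1 ≤ m → F j ≤ F i := by
    intro i j hij hjm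
    induction j with
    | zero =>
      have : i = 0 := by omega
      subst this; rfl
    | succ j ih =>
      rcases Nat.lt_or_ge i (j+1) with hlt | hge
      · have hstep : F (j+1) ≤ F j := by
          apply Real.log_le_log (hqpos _ hjm)
          have := hq_step (j+1) (by omega) hjm
          simpa using this
        exact le_trans hstep (ih (by omega) (by omega))
      · have : i = j + 1 := by omega
        subst this; rfl
  -- telescoping
  have htel : ∀ a b, a ≤ b → b ≤ m → Real.log (p b / p a) = ∑ j ∈ Ico a b, F j := by
    intro a b hab hbm
    induction b with
    | zero =>
      have : a = 0 := by omega
      subst this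
      simp [div_self (ne_of_gt (hppos 0 (by omega)))]
    | succ b ih =>
      rcases Nat.lt_or_ge a (b+1) with hlt | hge
      · have hab' : a ≤ b := by omega
        rw [Finset.sum_Ico_succ_top hab', ← ih hab' (by omega), hF]
        rw [← Real.log_mul (ne_of_gt (div_pos (hppos b (by omega)) (hppos a (by omega))))
          (ne_of_gt (hqpos b hbm))]
        have hb0 : p b ≠ 0 := ne_of_gt (hppos b (by omega))
        have ha0 : p a ≠ 0 := ne_of_gt (hppos a (by omega))
        have hb1 : p (b+1) ≠ 0 := ne_of_gt (hppos (b+1) hbm)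
        congr 1
        field_simp
      · have : a = b + 1 := by omega
        subst this
        simp [div_self (ne_of_gt (hppos (b+1) hbm))]
  -- final
  have hbL : 0 < p m / p L := div_pos (hppos m le_rfl) (hppos L hmL.le)
  have hbs : 0 < p r / p s := div_pos (hppos r hrm) (hppos s (by omega))
  have hgoalL : (esym n m l / (n.choose m : ℝ)) / (esym n L l / (n.choose L : ℝ)) = p m / p L := rfl
  have hgoalR : (esym n r l / (n.choose r : ℝ)) / (esym n s l / (n.choose s : ℝ)) = p r / p s := rfl
  rw [hgoalL, hgoalR, Real.rpow_def_of_pos hbL, Real.rpow_def_of_pos hbs]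
  apply Real.exp_le_exp.mpr
  rw [htel L m hmL.le le_rfl, htel s r hsr.le hrm]
  have hmono' : ∀ i j, s ≤ i → i ≤ j → j < m → F j ≤ F i :=
    fun i j _ hij hjm => hmono i j hij (by omega)
  have step1 := avg_left F s L m hsL hmL hmono'
  have step2 := avg_right F s r m hsr hrm hmono'
  have := le_trans step1 step2
  calc (∑ j ∈ Ico L m, F j) * (1 / ((m:ℝ) - L))
      = (∑ j ∈ Ico L m, F j) / ((m:ℝ) - L) := by ring
    _ ≤ (∑ j ∈ Ico s r, F j) / ((r:ℝ) - s) := this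
    _ = (∑ j ∈ Ico s r, F j) * (1 / ((r:ℝ) - s)) := by ring
end

section
/- If λ ∈ Γ_k, λ is ordered λ_1 ≥ ⋯ ≥ λ_n, and additionally σ_{k+1}(λ) > −A for some constant A > 0, then λ_n > −C for a constant C depending only on n, k, A, and σ_k(λ); in particular the semi-convexity condition λ_n bounded below follows from a lower bound on σ_{k+1}. (Alternatively: σ_{k+1}(λ) > −A together with λ ∈ Γ_k implies all eigenvalues are bounded below in terms of n, k, A and an upper bound on σ_k(λ).) -/
open Finset

open Polynomial


-- E1: sum over erased powersets
lemma E1 {ι : Type*} [DecidableEq ι] (t : Finset ι) (j : ℕ) (f : ι → ℝ) :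
    ∑ i ∈ t, ∑ s ∈ (t.erase i).powersetCard j, ∏ x ∈ s, f x
      = ((t.card - j : ℕ) : ℝ) * ∑ s ∈ t.powersetCard j, ∏ x ∈ s, f x := by
  have h1 : ∀ i, (t.erase i).powersetCard j
      = (t.powersetCard j).filter (fun s => i ∉ s) := by
    intro i
    ext s
    simp only [mem_powersetCard, mem_filter, Finset.subset_erase]
    tauto
  calc ∑ i ∈ t, ∑ s ∈ (t.erase i).powersetCard j, ∏ x ∈ s, f x
      = ∑ i ∈ t, ∑ s ∈ t.powersetCard j, if i ∉ s then ∏ x ∈ s, f x else 0 := by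
        refine Finset.sum_congr rfl fun i _ => ?_
        rw [h1 i, Finset.sum_filter]
    _ = ∑ s ∈ t.powersetCard j, ∑ i ∈ t, if i ∉ s then ∏ x ∈ s, f x else 0 :=
        Finset.sum_comm
    _ = ∑ s ∈ t.powersetCard j, ((t.card - j : ℕ) : ℝ) * ∏ x ∈ s, f x := by
        refine Finset.sum_congr rfl fun s hs => ?_
        rw [mem_powersetCard] at hs
        rw [← Finset.sum_filter, Finset.sum_const, ← Finset.sdiff_eq_filter,
          Finset.card_sdiff_of_subset hs.1, hs.2, nsmul_eq_mul]
    _ = _ := by rw [← Finset.mul_sum]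

lemma baby_fin {ι : Type*} [DecidableEq ι] (t : Finset ι) (f : ι → ℝ) (m : ℕ)
    (hm : t.card = m + 2) :
    2*(m+2) * ((∑ s ∈ t.powersetCard (m+2), ∏ x ∈ s, f x)
        * (∑ s ∈ t.powersetCard m, ∏ x ∈ s, f x))
      ≤ (m+1) * (∑ s ∈ t.powersetCard (m+1), ∏ x ∈ s, f x)^2 := by
  set q : ι → ℝ := fun i => ∏ x ∈ t.erase i, f x with hq
  -- e_{m+1} = ∑ q
  have lem_single : ∀ (t' : Finset ι) (j : ℕ), t'.card = j + 1 →
      ∑ i ∈ t', ∏ x ∈ t'.erase i, f x = ∑ s ∈ t'.powersetCard j, ∏ x ∈ s, f x := by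
    intro t' j hj
    have := E1 t' j f
    rw [hj] at this
    simp only [Nat.add_sub_cancel_left, Nat.add_sub_cancel, Nat.cast_one, one_mul] at this
    rw [← this]
    refine Finset.sum_congr rfl fun i hi => ?_
    have hc : (t'.erase i).card = j := by rw [Finset.card_erase_of_mem hi, hj]; rfl
    rw [← hc, Finset.powersetCard_self, Finset.sum_singleton]
  have h1 : ∑ s ∈ t.powersetCard (m+1), ∏ x ∈ s, f x = ∑ i ∈ t, q i :=
    (lem_single t (m+1) hm).symm
  -- e_{m+2} = ∏ f
  have h2 : ∑ s ∈ t.powersetCard (m+2), ∏ x ∈ s, f x = ∏ x ∈ t, f x := by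
    rw [← hm, Finset.powersetCard_self, Finset.sum_singleton]
  -- cross terms
  have hqq : ∀ i ∈ t, ∀ j ∈ t.erase i, q i * q j
      = (∏ x ∈ t, f x) * ∏ x ∈ (t.erase i).erase j, f x := by
    intro i hi j hj
    have hji : j ≠ i := Finset.ne_of_mem_erase hj
    have hjt : j ∈ t := Finset.mem_of_mem_erase hj
    have e1 : q i = f j * ∏ x ∈ (t.erase i).erase j, f x := by
      rw [hq]; exact (Finset.mul_prod_erase _ f hj).symm
    have e2 : q j = f i * ∏ x ∈ (t.erase j).erase i, f x := by
      rw [hq]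
      have : i ∈ t.erase j := Finset.mem_erase.2 ⟨(Ne.symm hji), hi⟩
      exact (Finset.mul_prod_erase _ f this).symm
    have e3 : (t.erase j).erase i = (t.erase i).erase j := Finset.erase_right_comm
    have e4 : (∏ x ∈ t, f x) = f i * (f j * ∏ x ∈ (t.erase i).erase j, f x) := by
      rw [← Finset.mul_prod_erase t f hi, ← Finset.mul_prod_erase _ f hj]
    rw [e1, e2, e3, e4]; ring
  have h3 : ∑ i ∈ t, ∑ j ∈ t.erase i, q i * q j
      = (∏ x ∈ t, f x) * (2 * ∑ s ∈ t.powersetCard m, ∏ x ∈ s, f x) := by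
    have step : ∑ i ∈ t, ∑ j ∈ t.erase i, q i * q j
        = ∑ i ∈ t, ∑ s ∈ (t.erase i).powersetCard m, (∏ x ∈ t, f x) * ∏ x ∈ s, f x := by
      refine Finset.sum_congr rfl fun i hi => ?_
      calc ∑ j ∈ t.erase i, q i * q j
          = ∑ j ∈ t.erase i, (∏ x ∈ t, f x) * ∏ x ∈ (t.erase i).erase j, f x :=
            Finset.sum_congr rfl fun j hj => hqq i hi j hj
        _ = (∏ x ∈ t, f x) * ∑ j ∈ t.erase i, ∏ x ∈ (t.erase i).erase j, f x :=
            (Finset.mul_sum _ _ _).symm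
        _ = (∏ x ∈ t, f x) * ∑ s ∈ (t.erase i).powersetCard m, ∏ x ∈ s, f x := by
            rw [lem_single (t.erase i) m (by rw [Finset.card_erase_of_mem hi, hm]; rfl)]
        _ = _ := Finset.mul_sum _ _ _
    rw [step]
    have step2 : ∀ i ∈ t, ∑ s ∈ (t.erase i).powersetCard m, (∏ x ∈ t, f x) * ∏ x ∈ s, f x
        = (∏ x ∈ t, f x) * ∑ s ∈ (t.erase i).powersetCard m, ∏ x ∈ s, f x :=
      fun i _ => (Finset.mul_sum _ _ _).symm
    rw [Finset.sum_congr rfl step2, ← Finset.mul_sum, E1 t m f, hm]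
    have : (m + 2 - m : ℕ) = 2 := by omega
    rw [this]
    push_cast
    ring
  -- (∑q)^2 = ∑ q^2 + ∑∑
  have h4 : (∑ i ∈ t, q i)^2 = (∑ i ∈ t, q i ^ 2) + ∑ i ∈ t, ∑ j ∈ t.erase i, q i * q j := by
    rw [sq, Finset.sum_mul_sum, ← Finset.sum_add_distrib]
    refine Finset.sum_congr rfl fun i hi => ?_
    rw [← Finset.add_sum_erase _ _ hi, sq]
  -- Cauchy-Schwarz
  have h5 : (∑ i ∈ t, q i)^2 ≤ (m+2 : ℝ) * ∑ i ∈ t, q i ^ 2 := by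
    have := sq_sum_le_card_mul_sum_sq (s := t) (f := q)
    rw [hm] at this
    exact_mod_cast this
  -- conclude
  rw [h1, h2]
  nlinarith [h3, h4, h5, sq_nonneg (∑ i ∈ t, q i)]

lemma baby_multiset (m : ℕ) (r : Multiset ℝ) (hr : Multiset.card r = m + 2) :
    2*(m+2) * (r.esymm (m+2) * r.esymm m) ≤ (m+1) * (r.esymm (m+1))^2 := by
  have hl : (r.toList : Multiset ℝ) = r := r.coe_toList
  set L := r.toList with hL
  have hlen : L.length = m + 2 := by rw [← hr, ← hl]; rfl
  have key : ∀ j, r.esymm j = ∑ s ∈ (Finset.univ : Finset (Fin L.length)).powersetCard j,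
      ∏ x ∈ s, L.get x := by
    intro j
    have : (Finset.univ.val.map L.get) = r := by
      rw [Fin.univ_def]
      change (Multiset.map L.get ↑(List.finRange L.length)) = r
      rw [Multiset.map_coe, List.map_get_finRange, hl]
    rw [← this, Finset.esymm_map_val]
  have hcard : (Finset.univ : Finset (Fin L.length)).card = m + 2 := by
    simp [hlen]
  rw [key, key, key]
  exact baby_fin _ _ m hcard

-- iterated derivative root count

lemma card_roots_le_iterate (p : Polynomial ℝ) (d : ℕ) :
    Multiset.card p.roots ≤ Multiset.card ((derivative)^[d] p).roots + d := by
  induction d generalizing p with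
  | zero => simp
  | succ d ih =>
    calc Multiset.card p.roots ≤ Multiset.card (derivative p).roots + 1 :=
          p.card_roots_le_derivative
      _ ≤ (Multiset.card ((derivative)^[d] (derivative p)).roots + d) + 1 := by
          exact add_le_add_left (ih (derivative p)) 1
      _ = Multiset.card ((derivative)^[d+1] p).roots + (d+1) := by
          rw [Function.iterate_succ_apply]; ring

lemma newton (k : ℕ) (hk : 1 ≤ k) (s : Multiset ℝ) :
    (((k+1) * (Multiset.card s - k + 1) : ℕ) : ℝ) * (s.esymm (k+1) * s.esymm (k-1))
      ≤ (((k * (Multiset.card s - k) : ℕ)) : ℝ) * s.esymm k ^ 2 := by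
  by_cases hkN : Multiset.card s ≤ k
  · have h0 : s.esymm (k+1) = 0 := by
      rw [Multiset.esymm, Multiset.powersetCard_eq_empty (k+1) (by omega)]
      simp
    rw [h0]
    have : (((k * (Multiset.card s - k) : ℕ)) : ℝ) * s.esymm k ^ 2 ≥ 0 := by positivity
    nlinarith
  push_neg at hkN
  set N := Multiset.card s with hN
  set d := N - k - 1 with hd
  have hNk : N - k = d + 1 := by omega
  set g : Polynomial ℝ := (s.map (fun a => X - C a)).prod with hg
  have hgroots : g.roots = s := roots_multiset_prod_X_sub_C s
  have hgdeg : g.natDegree = N := natDegree_multiset_prod_X_sub_C_eq_card s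
  set h : Polynomial ℝ := (derivative)^[d] g with hh
  have hub : h.natDegree ≤ k + 1 := by
    have h1 := natDegree_iterate_derivative g d
    rw [← hh, hgdeg] at h1
    omega
  have hlb : k + 1 ≤ Multiset.card h.roots := by
    have h2 := card_roots_le_iterate g d
    rw [← hh, hgroots, ← hN] at h2
    omega
  have hcr : Multiset.card h.roots ≤ h.natDegree := card_roots' h
  have hdeg : h.natDegree = k + 1 := by omega
  have hroots : Multiset.card h.roots = h.natDegree := by omega
  -- coefficients of h from g
  have hcoeff : ∀ j : ℕ, j ≤ 2 → h.coeff j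
      = (((j+d).descFactorial d : ℕ) : ℝ) * ((-1 : ℝ)^(k+1-j) * s.esymm (k+1-j)) := by
    intro j hj
    rw [hh, Polynomial.coeff_iterate_derivative, nsmul_eq_mul]
    congr 1
    have hle : j + d ≤ Multiset.card s := by omega
    have h3 := Multiset.prod_X_sub_C_coeff s hle
    rw [← hg] at h3
    rw [h3]
    have h4 : Multiset.card s - (j + d) = k + 1 - j := by omega
    rw [h4]
  set L := h.leadingCoeff with hLdef
  have hrc : ∀ j : ℕ, j ≤ 2 → h.coeff j = L * ((-1:ℝ)^(k+1-j) * h.roots.esymm (k+1-j)) := by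
    intro j hj
    have h5 := Polynomial.coeff_eq_esymm_roots_of_card hroots (k := j) (by omega)
    rw [h5, hdeg]
    ring
  have hLe : ∀ j : ℕ, j ≤ 2 → L * h.roots.esymm (k+1-j) = (-1:ℝ)^(k+1-j) * h.coeff j := by
    intro j hj
    have hsq : ((-1:ℝ)^(k+1-j)) * ((-1:ℝ)^(k+1-j)) = 1 := by
      rw [← pow_add, ← two_mul, pow_mul, neg_one_sq, one_pow]
    rw [hrc j hj]
    linear_combination (-(L * h.roots.esymm (k+1-j))) * hsq
  -- baby newton on roots of h
  have hbc : Multiset.card h.roots = (k-1) + 2 := by omega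
  have hbaby := baby_multiset (k-1) h.roots hbc
  have hk1 : (k-1) + 2 = k + 1 := by omega
  have hk2 : (k-1) + 1 = k := by omega
  rw [hk1, hk2] at hbaby
  have copt : ((k-1:ℕ):ℝ) + 2 = (k:ℝ) + 1 := by
    rw [Nat.cast_sub hk]; ring
  have copt2 : ((k-1:ℕ):ℝ) + 1 = (k:ℝ) := by
    rw [Nat.cast_sub hk]; ring
  rw [copt, copt2] at hbaby
  -- multiply by L^2
  have hbaby2 : 2*((k:ℝ)+1) * ((L * h.roots.esymm (k+1)) * (L * h.roots.esymm (k-1)))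
      ≤ (k:ℝ) * (L * h.roots.esymm k)^2 := by
    have h6 := mul_le_mul_of_nonneg_left hbaby (sq_nonneg L)
    calc 2*((k:ℝ)+1) * ((L * h.roots.esymm (k+1)) * (L * h.roots.esymm (k-1)))
        = L^2 * (2*((k:ℝ)+1) * (h.roots.esymm (k+1) * h.roots.esymm (k-1))) := by ring
      _ ≤ L^2 * ((k:ℝ) * h.roots.esymm k ^2) := h6
      _ = (k:ℝ) * (L * h.roots.esymm k)^2 := by ring
  have e0 : k + 1 - 0 = k + 1 := by omega
  have e1 : k + 1 - 1 = k := by omega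
  have e2 : k + 1 - 2 = k - 1 := by omega
  have q0 := hLe 0 (by omega); rw [e0] at q0
  have q1 := hLe 1 (by omega); rw [e1] at q1
  have q2 := hLe 2 (by omega); rw [e2] at q2
  rw [q0, q1, q2] at hbaby2
  have s1 : ((-1:ℝ)^(k+1)) * ((-1:ℝ)^(k-1)) = 1 := by
    rw [← pow_add]
    have h7 : (k+1) + (k-1) = 2*k := by omega
    rw [h7, pow_mul, neg_one_sq, one_pow]
  have s2 : ((-1:ℝ)^k) * ((-1:ℝ)^k) = 1 := by
    rw [← pow_add, ← two_mul, pow_mul, neg_one_sq, one_pow]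
  have eqA : 2*((k:ℝ)+1)*(((-1:ℝ)^(k+1) * h.coeff 0)*((-1:ℝ)^(k-1) * h.coeff 2))
      = 2*((k:ℝ)+1)*(h.coeff 0 * h.coeff 2) := by
    linear_combination (2*((k:ℝ)+1)*(h.coeff 0)*(h.coeff 2))*s1
  have eqB : (k:ℝ)*((-1:ℝ)^k * h.coeff 1)^2 = (k:ℝ)*(h.coeff 1)^2 := by
    linear_combination ((k:ℝ)*(h.coeff 1)^2)*s2
  rw [show 2*((k:ℝ)+1) * (((-1:ℝ)^(k+1) * h.coeff 0)*((-1:ℝ)^(k-1) * h.coeff 2))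
      = 2*((k:ℝ)+1)*(h.coeff 0 * h.coeff 2) from eqA] at hbaby2
  rw [eqB] at hbaby2
  -- substitute coefficients from g
  have c0e := hcoeff 0 (by omega); rw [e0] at c0e
  have c1e := hcoeff 1 (by omega); rw [e1] at c1e
  have c2e := hcoeff 2 (by omega); rw [e2] at c2e
  rw [c0e, c1e, c2e] at hbaby2
  set c0 : ℕ := (0+d).descFactorial d with hc0
  set c1 : ℕ := (1+d).descFactorial d with hc1
  set c2 : ℕ := (2+d).descFactorial d with hc2
  -- nat descFactorial identities
  have hc1' : c1 = (d+1).factorial := by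
    have h8 := Nat.descFactorial_succ (d+1) d
    have e : d+1-d = 1 := by omega
    rw [e, one_mul, Nat.descFactorial_self] at h8
    rw [hc1, Nat.add_comm 1 d, ← h8]
  have hc0' : c0 = d.factorial := by rw [hc0, Nat.zero_add, Nat.descFactorial_self]
  have hc2' : 2 * c2 = (d+2).factorial := by
    have h9 := Nat.descFactorial_succ (d+2) (d+1)
    have h10 := Nat.descFactorial_succ (d+2) d
    have e : d+1+1 = d+2 := by omega
    have e' : d+2-(d+1) = 1 := by omega
    have e'' : d+2-d = 2 := by omega
    rw [e, e', one_mul, Nat.descFactorial_self] at h9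
    rw [e''] at h10
    rw [hc2, Nat.add_comm 2 d]
    omega
  have hfact2 : (d+2).factorial = (d+2) * (d+1).factorial := by
    rw [show d+2 = (d+1)+1 by omega, Nat.factorial_succ]
  have hfact1 : (d+1).factorial = (d+1) * d.factorial := Nat.factorial_succ d
  have id1 : 2 * ((k+1) * (c0 * c2)) = (d.factorial * (d+1).factorial) * ((k+1)*(d+2)) := by
    have : 2 * (c0 * c2) = c0 * (2 * c2) := by ring
    rw [show 2 * ((k+1) * (c0 * c2)) = (k+1) * (c0 * (2*c2)) by ring, hc0', hc2', hfact2]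
    ring
  have id2 : k * (c1 * c1) = (d.factorial * (d+1).factorial) * (k*(d+1)) := by
    rw [hc1']
    calc k * ((d+1).factorial * (d+1).factorial)
        = k * (((d+1) * d.factorial) * (d+1).factorial) := by rw [← hfact1]
      _ = (d.factorial * (d+1).factorial) * (k*(d+1)) := by ring
  -- cast identities
  have this1 := congrArg (fun x : ℕ => (x:ℝ)) id1
  have this2 := congrArg (fun x : ℕ => (x:ℝ)) id2
  push_cast at this1 this2
  set G : ℝ := ((d.factorial * (d+1).factorial : ℕ) : ℝ) with hG
  have hGpos : (0:ℝ) < G := by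
    rw [hG]
    have := Nat.factorial_pos d
    have := Nat.factorial_pos (d+1)
    positivity
  set E0 : ℝ := s.esymm (k+1)
  set E1' : ℝ := s.esymm k
  set E2 : ℝ := s.esymm (k-1)
  have eqL : G * ((((k+1)*(d+2) : ℕ) : ℝ) * (E0*E2))
      = 2*((k:ℝ)+1)*(((c0:ℕ):ℝ)*((-1:ℝ)^(k+1)*E0) * (((c2:ℕ):ℝ)*((-1:ℝ)^(k-1)*E2))) := by
    push_cast [hG] at *
    linear_combination (E0*E2) * this1.symm + (-(2*((k:ℝ)+1)*(c0:ℝ)*(c2:ℝ)*E0*E2)) * s1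
  have eqR : G * (((k*(d+1) : ℕ) : ℝ) * E1'^2)
      = (k:ℝ) * (((c1:ℕ):ℝ)*((-1:ℝ)^k*E1'))^2 := by
    push_cast [hG] at *
    linear_combination (E1'^2) * this2.symm + (-((k:ℝ)*(c1:ℝ)*(c1:ℝ)*E1'^2)) * s2
  have key : G * ((((k+1)*(d+2) : ℕ) : ℝ) * (E0*E2)) ≤ G * (((k*(d+1) : ℕ) : ℝ) * E1'^2) := by
    rw [eqL, eqR]
    exact hbaby2
  have key2 := le_of_mul_le_mul_left key hGpos
  rw [hNk, show d+1+1 = d+2 by omega]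
  exact key2

lemma esymDel_zero (n : ℕ) (l : Fin n → ℝ) (i : Fin n) : esymDel n 0 l i = 1 := by
  rw [esymDel, Finset.powersetCard_zero, Finset.sum_singleton, Finset.prod_empty]

lemma esymDel_of_big (n j : ℕ) (hj : n ≤ j) (l : Fin n → ℝ) (i : Fin n) :
    esymDel n j l i = 0 := by
  have h1 : (Finset.univ.erase i).card = n - 1 := by
    rw [Finset.card_erase_of_mem (Finset.mem_univ i), Finset.card_univ, Fintype.card_fin]
  have h2 : (Finset.univ.erase i).card < j := by rw [h1]; have := i.isLt; omega
  rw [esymDel, Finset.powersetCard_eq_empty.2 h2, Finset.sum_empty]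

lemma esym_split (n j : ℕ) (l : Fin n → ℝ) (i : Fin n) :
    esym n (j+1) l = l i * esymDel n j l i + esymDel n (j+1) l i := by
  have hu : (Finset.univ : Finset (Fin n)) = insert i (Finset.univ.erase i) :=
    (Finset.insert_erase (Finset.mem_univ i)).symm
  rw [esym, esymDel, esymDel]
  conv_lhs => rw [hu]
  rw [Finset.powersetCard_succ_insert (Finset.notMem_erase i _)]
  rw [Finset.sum_union]
  · rw [add_comm]
    congr 1
    rw [Finset.sum_image]
    · rw [Finset.mul_sum]
      refine Finset.sum_congr rfl fun s hs => ?_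
      rw [Finset.mem_powersetCard] at hs
      have hi : i ∉ s := fun hmem => (Finset.notMem_erase i _) (hs.1 hmem)
      rw [Finset.prod_insert hi]
    · intro s hs t ht hst
      rw [Finset.mem_coe, Finset.mem_powersetCard] at hs ht
      have his : i ∉ s := fun hmem => (Finset.notMem_erase i _) (hs.1 hmem)
      have hit : i ∉ t := fun hmem => (Finset.notMem_erase i _) (ht.1 hmem)
      have := congrArg (Finset.erase · i) hst
      simpa [Finset.erase_insert his, Finset.erase_insert hit] using this
  · rw [Finset.disjoint_right]
    intro s hs hs'
    rw [Finset.mem_image] at hs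
    rw [Finset.mem_powersetCard] at hs'
    obtain ⟨t, ht, rfl⟩ := hs
    exact (Finset.notMem_erase i _) (hs'.1 (Finset.mem_insert_self i t))

lemma esymDel_eq_esymm (n j : ℕ) (l : Fin n → ℝ) (i : Fin n) :
    esymDel n j l i = ((Finset.univ.erase i).val.map l).esymm j := by
  rw [esymDel, Finset.esymm_map_val]

set_option maxHeartbeats 1000000 in
theorem semiconvex_from_sigma_kp1 (n k : ℕ) (hk1 : 1 ≤ k) (hkn : k ≤ n)
    (A B : ℝ) (hA : 0 < A) :
    ∃ C > 0, ∀ l : Fin n → ℝ, GammaCone n k l → -A < esym n (k + 1) l →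
      esym n k l ≤ B → ∀ i : Fin n, -C < l i := by
  set B' : ℝ := max B 0 with hB'def
  have hB'0 : 0 ≤ B' := le_max_right B 0
  set P : ℕ := (k+1) * (n-k) with hPdef
  set Q : ℕ := k * (n-1-k) with hQdef
  have hq0 : (0:ℝ) ≤ (Q:ℝ) := Nat.cast_nonneg Q
  have hp0 : (0:ℝ) ≤ (P:ℝ) := Nat.cast_nonneg P
  refine ⟨1 + 2*(Q:ℝ)*B' + 2*(P:ℝ)*A, ?_, ?_⟩
  · linarith [mul_nonneg hq0 hB'0, mul_nonneg hp0 hA.le]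
  intro l hG hkp1 hB i
  by_contra hcon
  push_neg at hcon
  set m : ℝ := -(l i) with hmdef
  have hmC : 1 + 2*(Q:ℝ)*B' + 2*(P:ℝ)*A ≤ m := by rw [hmdef]; linarith
  have hm1 : (1:ℝ) ≤ m := by linarith [hmC, mul_nonneg hq0 hB'0, mul_nonneg hp0 hA.le]
  have hmpos : (0:ℝ) < m := by linarith
  -- the chain of lower bounds
  have chain : ∀ j : ℕ, j ≤ k → m^j ≤ esymDel n j l i := by
    intro j
    induction j with
    | zero => intro _; rw [esymDel_zero, pow_zero]
    | succ j ih =>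
      intro hj
      have hvj := ih (by omega)
      have hpos := hG (j+1) (by omega) hj
      have hsplit := esym_split n j l i
      have heq : esymDel n (j+1) l i = esym n (j+1) l + m * esymDel n j l i := by
        rw [hsplit, hmdef]; ring
      rw [heq, pow_succ]
      have hmm : m^j * m ≤ esymDel n j l i * m :=
        mul_le_mul_of_nonneg_right hvj hmpos.le
      linarith
  -- k = n case: contradiction
  by_cases hkn' : k = n
  · have h1 := chain k le_rfl
    rw [esymDel_of_big n k (by omega) l i] at h1
    nlinarith [pow_pos hmpos k]
  have hkn2 : k ≤ n - 1 := by omega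
  have hn1 : 1 ≤ n := by omega
  set u : ℝ := esymDel n k l i with hudef
  set vv : ℝ := esymDel n (k-1) l i with hvdef
  set w : ℝ := esymDel n (k+1) l i with hwdef
  have hu : m^k ≤ u := chain k le_rfl
  have hv : m^(k-1) ≤ vv := chain (k-1) (by omega)
  -- newton inequality
  have hnewt : (P:ℝ) * (w * vv) ≤ (Q:ℝ) * u^2 := by
    set s : Multiset ℝ := ((Finset.univ.erase i).val.map l) with hsdef
    have hcard : Multiset.card s = n - 1 := by
      rw [hsdef, Multiset.card_map]
      show (Finset.univ.erase i).card = n - 1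
      rw [Finset.card_erase_of_mem (Finset.mem_univ i), Finset.card_univ, Fintype.card_fin]
    have h2 := newton k hk1 s
    rw [hcard, show n - 1 - k + 1 = n - k by omega] at h2
    rw [hudef, hvdef, hwdef, esymDel_eq_esymm, esymDel_eq_esymm, esymDel_eq_esymm, ← hsdef,
      hPdef, hQdef]
    exact h2
  -- split identities
  have hsk : u = esym n k l + m * vv := by
    have h3 := esym_split n (k-1) l i
    rw [show k - 1 + 1 = k by omega] at h3
    rw [hudef, hvdef, h3, hmdef]; ring
  have hsk1 : esym n (k+1) l = -(m*u) + w := by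
    have h4 := esym_split n k l i
    rw [h4, hmdef, hudef, hwdef]; ring
  -- basic facts
  have hp1 : (1:ℝ) ≤ (P:ℝ) := by
    have h5 : 1 ≤ P := by
      rw [hPdef]
      calc 1 = 1 * 1 := rfl
        _ ≤ (k+1) * (n-k) := Nat.mul_le_mul (by omega) (by omega)
    exact_mod_cast h5
  have hPQ : (P:ℝ) = (Q:ℝ) + (n:ℝ) := by
    have h6 : P = Q + n := by
      rw [hPdef, hQdef]
      obtain ⟨a, ha, ha1⟩ : ∃ a, n = k + a ∧ 1 ≤ a := ⟨n - k, by omega, by omega⟩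
      obtain ⟨b, hb⟩ : ∃ b, a = b + 1 := ⟨a - 1, by omega⟩
      subst ha hb
      rw [show k + (b+1) - k = b+1 by omega, show k + (b+1) - 1 - k = b by omega]
      ring
    exact_mod_cast congrArg (fun x : ℕ => (x:ℝ)) h6
  have hn1R : (1:ℝ) ≤ (n:ℝ) := by exact_mod_cast hn1
  have hvv1 : (1:ℝ) ≤ vv := by
    have := pow_le_pow_left₀ (by norm_num : (0:ℝ) ≤ 1) hm1 (k-1)
    rw [one_pow] at this
    linarith
  have hvvpos : (0:ℝ) < vv := by linarith
  have hupos : (0:ℝ) < u := lt_of_lt_of_le (pow_pos hmpos k) hu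
  have hBk' : esym n k l ≤ B' := hB.trans (le_max_left B 0)
  clear_value B' P Q m u vv w
  have h3 : m*u - w < A := by
    rw [hsk1] at hkp1; linarith
  have step1 : (Q:ℝ)*u ≤ (Q:ℝ)*B' + (Q:ℝ)*(m*vv) := by
    have e : (Q:ℝ)*u = (Q:ℝ)*(esym n k l) + (Q:ℝ)*(m*vv) := by rw [hsk]; ring
    have := mul_le_mul_of_nonneg_left hBk' hq0
    linarith
  have step2 : (Q:ℝ)*B' ≤ m/2 := by
    linarith [hmC, mul_nonneg hp0 hA.le]
  have step3 : (m*u - w)*((P:ℝ)*vv) < A*((P:ℝ)*vv) :=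
    mul_lt_mul_of_pos_right h3 (mul_pos (lt_of_lt_of_le one_pos hp1) hvvpos)
  have c2 : (P:ℝ)*(m*u*vv) - (Q:ℝ)*u^2 ≤ (m*u - w)*((P:ℝ)*vv) := by
    have e : (m*u - w)*((P:ℝ)*vv) = (P:ℝ)*(m*u*vv) - (P:ℝ)*(w*vv) := by ring
    linarith [hnewt]
  have c4 : (Q:ℝ)*u^2 ≤ ((Q:ℝ)*B' + (Q:ℝ)*(m*vv))*u := by
    have e : (Q:ℝ)*u^2 = ((Q:ℝ)*u)*u := by ring
    rw [e]
    exact mul_le_mul_of_nonneg_right step1 hupos.le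
  have inner : m*vv/2 ≤ (n:ℝ)*(m*vv) - (Q:ℝ)*B' := by
    have hmv : m ≤ m*vv := by
      have := mul_le_mul_of_nonneg_left hvv1 hmpos.le
      linarith [this]
    have hnmv : m*vv ≤ (n:ℝ)*(m*vv) := by
      have := mul_le_mul_of_nonneg_right hn1R (mul_nonneg hmpos.le hvvpos.le)
      linarith [this]
    linarith
  have c8 : u*(m*vv/2) ≤ (P:ℝ)*(m*u*vv) - ((Q:ℝ)*B' + (Q:ℝ)*(m*vv))*u := by
    have ePQ : (P:ℝ) - (Q:ℝ) = (n:ℝ) := by linarith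
    have e' : (P:ℝ)*(m*u*vv) - ((Q:ℝ)*B' + (Q:ℝ)*(m*vv))*u
        = u*(((P:ℝ) - (Q:ℝ))*(m*vv) - (Q:ℝ)*B') := by ring
    rw [e', ePQ]
    exact mul_le_mul_of_nonneg_left inner hupos.le
  have c9 : (m^k)*(m*vv/2) ≤ u*(m*vv/2) := by
    have : (0:ℝ) ≤ m*vv/2 := by
      have := mul_nonneg hmpos.le hvvpos.le
      linarith
    exact mul_le_mul_of_nonneg_right hu this
  have cfin : (m^k)*(m*vv/2) < A*((P:ℝ)*vv) := by linarith
  have hks : m^k * m = m^(k+1) := (pow_succ m k).symm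
  have hmk1 : m ≤ m^(k+1) := le_self_pow₀ hm1 (by omega)
  have cfin2 : (1 + 2*(Q:ℝ)*B' + 2*(P:ℝ)*A)*(vv/2) ≤ (m^k)*(m*vv/2) := by
    have e : (m^k)*(m*vv/2) = (m^(k+1))*(vv/2) := by rw [← hks]; ring
    rw [e]
    have h7 : (1 + 2*(Q:ℝ)*B' + 2*(P:ℝ)*A) ≤ m^(k+1) := le_trans hmC hmk1
    have h8 : (0:ℝ) ≤ vv/2 := by linarith
    exact mul_le_mul_of_nonneg_right h7 h8
  nlinarith [cfin, cfin2, hvvpos, mul_nonneg (mul_nonneg hq0 hB'0) hvvpos.le,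
    mul_nonneg hp0 hA.le]
end
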